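/- arXiv:2204.01336 — 8 statements merged into one kernel-verified Lean document; each statement's English description precedes it below -/
import Mathlib

section
/- The Bellman inequality holds for 𝓑: for every x ∈ ℝ and every τ ∈ (−1,1), 𝓑(x) ≥ (1/2)[𝓑(X(x,−τ)) + 𝓑(X(x,τ))], where X(x,τ) = (x+τ)/√(1−τ²). -/
open MeasureTheory

noncomputable section

/-- The dyadic subinterval `[k/2^n, (k+1)/2^n]` of `[0,1]`. -/
def dyadicI (n k : ℕ) : Set ℝ := Set.Icc ((k : ℝ) / 2 ^ n) (((k : ℝ) + 1) / 2 ^ n)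

/-- The Haar function of the dyadic interval `[k/2^n, (k+1)/2^n]`: it equals `-1` on the
left half of the interval, `+1` on its right half and `0` elsewhere. -/
def haar (n k : ℕ) (x : ℝ) : ℝ :=
  if x ∈ Set.Ico ((k : ℝ) / 2 ^ n) ((2 * (k : ℝ) + 1) / 2 ^ (n + 1)) then -1
  else if x ∈ Set.Ico ((2 * (k : ℝ) + 1) / 2 ^ (n + 1)) (((k : ℝ) + 1) / 2 ^ n) then 1
  else 0

/-- The Haar coefficient `a_J = μ(J)⁻¹ ∫_I f h_J` of `f` at `J = [k/2^n, (k+1)/2^n]`. -/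
def haarCoeff (f : ℝ → ℝ) (n k : ℕ) : ℝ :=
  2 ^ n * ∫ x in Set.Icc (0 : ℝ) 1, f x * haar n k x

/-- The dyadic square function `Sf = √(Σ_J a_J² χ_J)`. -/
def sqFn (f : ℝ → ℝ) (x : ℝ) : ℝ :=
  Real.sqrt (∑' p : ℕ × ℕ, (haarCoeff f p.1 p.2) ^ 2 * (dyadicI p.1 p.2).indicator 1 x)

/-- A test function for the Bellman function: integrable on `I = [0,1]`, with zero mean
and with dyadic square function essentially bounded by `1` on `I`. -/
def Admissible (f : ℝ → ℝ) : Prop :=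
  IntegrableOn f (Set.Icc 0 1) ∧ (∫ x in Set.Icc (0 : ℝ) 1, f x) = 0 ∧
    ∀ᵐ x ∂(volume.restrict (Set.Icc (0 : ℝ) 1)), sqFn f x ≤ 1

/-- The Bellman function `𝓑(x) = sup{ μ{f ≥ x} : ∫_I f = 0, ‖Sf‖_∞ ≤ 1 }`. -/
def bellman (x : ℝ) : ℝ :=
  sSup { m : ℝ | ∃ f : ℝ → ℝ, Admissible f ∧
    m = (volume { y ∈ Set.Icc (0 : ℝ) 1 | x ≤ f y }).toReal }

/-- `X(x,τ) = (x+τ)/√(1-τ²)`. -/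
def XX (x t : ℝ) : ℝ := (x + t) / Real.sqrt (1 - t ^ 2)

/-!
For `τ ∈ (-1, 1)` put `c = √(1 - τ²)`. Given admissible `f` and `g`, the function `glue c τ f g`
equal to `c f(2y) - τ` on `[0, 1/2)` and to `c g(2y - 1) + τ` on `[1/2, 1]` is again admissible:
it has mean zero, its top Haar coefficient is `τ`, and its other Haar coefficients are those of
`f` and `g` multiplied by `c`, so that on the two halves `(S glue)²` is `τ² + c² (S f)²`, resp.
`τ² + c² (S g)²`, at the rescaled point, hence at most `τ² + c² = 1`. Half of the level set
`{glue ≥ x}` comes from `{f ≥ (x + τ)/c} = {f ≥ X(x, τ)}` and half from `{g ≥ X(x, -τ)}`;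
taking suprema over `f` and `g` gives the inequality.
-/

open Set Filter

lemma two_mul_sub_mem_Ico_iff {a b j y : ℝ} :
    2 * y - j ∈ Ico a b ↔ y ∈ Ico ((a + j) / 2) ((b + j) / 2) := by
  simp only [mem_Ico]; constructor <;> rintro ⟨h₁, h₂⟩ <;> constructor <;> linarith

lemma two_mul_sub_mem_Icc_iff {a b j y : ℝ} :
    2 * y - j ∈ Icc a b ↔ y ∈ Icc ((a + j) / 2) ((b + j) / 2) := by
  simp only [mem_Icc]; constructor <;> rintro ⟨h₁, h₂⟩ <;> constructor <;> linarith

lemma volume_preimage_two_mul_sub (j : ℝ) (s : Set ℝ) :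
    volume ((fun y => 2 * y - j) ⁻¹' s) = volume s / 2 := by
  change volume ((2 * ·) ⁻¹' ((· + -j) ⁻¹' s)) = _
  rw [Real.volume_preimage_mul_left two_ne_zero, measure_preimage_add_right,
    abs_of_pos (by norm_num), ENNReal.ofReal_inv_of_pos two_pos, ENNReal.ofReal_ofNat, ENNReal.div_eq_inv_mul]

lemma ae_comp_two_mul_sub {P : ℝ → Prop} (h : ∀ᵐ x, P x) (j : ℝ) : ∀ᵐ y, P (2 * y - j) := by
  rw [ae_iff] at h ⊢
  exact (volume_preimage_two_mul_sub j {x | ¬P x}).trans (by rw [h, ENNReal.zero_div])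

lemma integral_comp_two_mul_sub (v : ℝ → ℝ) (j : ℝ) : ∫ y, v (2 * y - j) = 2⁻¹ * ∫ x, v x := by
  rw [Measure.integral_comp_mul_left (fun z => v (z - j)) 2, integral_sub_right_eq_self]
  norm_num

lemma setIntegral_Ico_comp_two_mul_sub (u : ℝ → ℝ) (j : ℝ) :
    ∫ y in Ico (j / 2) ((j + 1) / 2), u (2 * y - j) = 2⁻¹ * ∫ x in Ico 0 1, u x := by
  rw [integral_Ico_eq_integral_Ioc, integral_Ico_eq_integral_Ioc,
    ← intervalIntegral.integral_of_le (by linarith), ← intervalIntegral.integral_of_le zero_le_one,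
    intervalIntegral.integral_comp_mul_sub _ two_ne_zero]
  ring_nf

lemma integrableOn_comp_two_mul_sub {u : ℝ → ℝ} (hu : IntegrableOn u (Ico 0 1)) (j : ℝ) :
    IntegrableOn (fun y => u (2 * y - j)) (Ico (j / 2) ((j + 1) / 2)) := by
  rw [← intervalIntegrable_iff_integrableOn_Ico_of_le zero_le_one] at hu
  have := (hu.comp_sub_right j).comp_mul_left (c := 2)
  rw [← intervalIntegrable_iff_integrableOn_Ico_of_le (by linarith)]
  simpa [add_comm] using this

lemma setIntegral_Icc_eq_halves {G : ℝ → ℝ} (hG : IntegrableOn G (Icc 0 1)) :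
    ∫ y in Icc 0 1, G y = (∫ y in Ico 0 (1 / 2), G y) + ∫ y in Ico (1 / 2) 1, G y := by
  rw [integral_Icc_eq_integral_Ico, ← Ico_union_Ico_eq_Ico (b := 1 / 2) (by norm_num) (by norm_num),
    setIntegral_union Ico_disjoint_Ico_same measurableSet_Ico
      (hG.mono_set fun y hy => ⟨hy.1, by linarith [hy.2]⟩)
      (hG.mono_set fun y hy => ⟨by linarith [hy.1], hy.2.le⟩)]

lemma integrableOn_Ico_mul_add_const {F : ℝ → ℝ} (hF : IntegrableOn F (Icc 0 1)) (c a : ℝ) :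
    IntegrableOn (fun x => c * F x + a) (Ico 0 1) :=
  ((hF.mono_set Ico_subset_Icc_self).const_mul c).add (integrableOn_const measure_Ico_lt_top.ne)

lemma setIntegral_Ico_mul_add_const {F : ℝ → ℝ} (hF : IntegrableOn F (Icc 0 1)) (c a : ℝ) :
    ∫ x in Ico 0 1, (c * F x + a) = c * (∫ x in Icc 0 1, F x) + a := by
  rw [integral_add ((hF.mono_set Ico_subset_Icc_self).const_mul c)
    (integrableOn_const measure_Ico_lt_top.ne), integral_const_mul, ← integral_Icc_eq_integral_Ico]
  simp

lemma dyadic_endpoint_succ (n j : ℕ) (a : ℝ) :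
    (a / 2 ^ n + j) / 2 = (2 ^ n * j + a) / 2 ^ (n + 1) := by
  field_simp; ring

lemma mem_dyadicI_succ_iff (n k j : ℕ) (y : ℝ) :
    y ∈ dyadicI (n + 1) (k + j * 2 ^ n) ↔ 2 * y - j ∈ dyadicI n k := by
  rw [dyadicI, dyadicI, two_mul_sub_mem_Icc_iff, dyadic_endpoint_succ, dyadic_endpoint_succ]
  push_cast; ring_nf

lemma mem_Ico_dyadic_succ_iff (n k j : ℕ) (y : ℝ) :
    y ∈ Ico (((k + j * 2 ^ n : ℕ) : ℝ) / 2 ^ (n + 1)) (((k + j * 2 ^ n : ℕ) + 1) / 2 ^ (n + 1)) ↔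
      2 * y - j ∈ Ico ((k : ℝ) / 2 ^ n) ((k + 1) / 2 ^ n) := by
  rw [two_mul_sub_mem_Ico_iff, dyadic_endpoint_succ, dyadic_endpoint_succ]
  push_cast; ring_nf

lemma Ico_dyadic_subset_Ico {n k : ℕ} (hk : k < 2 ^ n) :
    Ico ((k : ℝ) / 2 ^ n) ((k + 1) / 2 ^ n) ⊆ Ico 0 1 := by
  have hk' : (k : ℝ) + 1 ≤ 2 ^ n := by exact_mod_cast hk
  exact fun x hx => ⟨(by positivity : (0 : ℝ) ≤ k / 2 ^ n).trans hx.1,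
    hx.2.trans_le ((div_le_one (by positivity)).mpr hk')⟩

lemma lt_of_mem_dyadicI {n k m : ℕ} {y : ℝ} (hy : y ∈ dyadicI n k) (hm : 2 ^ n * y < m) :
    k < m := by
  have := (div_le_iff₀' (by positivity)).mp hy.1
  exact_mod_cast this.trans_lt hm

lemma le_of_mem_dyadicI {n k m : ℕ} {y : ℝ} (hy : y ∈ dyadicI n k) (hm : m < 2 ^ n * y) :
    m ≤ k := by
  have := (le_div_iff₀' (by positivity)).mp hy.2
  exact Nat.lt_succ_iff.mp (by exact_mod_cast hm.trans_le this)

lemma exists_eq_child_of_mem_dyadicI {n k j : ℕ} {y : ℝ} (hj : j ≤ 1) (hy₁ : j < 2 * y)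
    (hy₂ : 2 * y < j + 1) (hmem : y ∈ dyadicI n k) (hne : (n, k) ≠ (0, 0)) :
    ∃ m i, (m + 1, i + j * 2 ^ m) = (n, k) := by
  have hj' : (j : ℝ) ≤ 1 := by exact_mod_cast hj
  cases n with
  | zero =>
    have : k < 1 := lt_of_mem_dyadicI (m := 1) hmem (by push_cast; linarith)
    exact absurd (by rw [Nat.lt_one_iff.mp this]) hne
  | succ m =>
    have : j * 2 ^ m ≤ k := le_of_mem_dyadicI hmem <| by
      push_cast; rw [pow_succ]; nlinarith [pow_pos (two_pos : (0 : ℝ) < 2) m]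
    exact ⟨m, k - j * 2 ^ m, Prod.ext rfl (Nat.sub_add_cancel this)⟩

lemma indicator_dyadicI_succ (n k j : ℕ) (y : ℝ) :
    (dyadicI (n + 1) (k + j * 2 ^ n)).indicator (1 : ℝ → ℝ) y =
      (dyadicI n k).indicator 1 (2 * y - j) := by
  by_cases h : y ∈ dyadicI (n + 1) (k + j * 2 ^ n)
  · rw [indicator_of_mem h, indicator_of_mem ((mem_dyadicI_succ_iff n k j y).mp h)]; rfl
  · rw [indicator_of_notMem h, indicator_of_notMem (mt (mem_dyadicI_succ_iff n k j y).mpr h)]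

lemma dyadic_left_le_mid (n k : ℕ) : (k : ℝ) / 2 ^ n ≤ (2 * k + 1) / 2 ^ (n + 1) := by
  rw [div_le_div_iff₀ (by positivity) (by positivity), pow_succ]
  nlinarith [pow_pos (two_pos : (0 : ℝ) < 2) n]

lemma dyadic_mid_le_right (n k : ℕ) : (2 * (k : ℝ) + 1) / 2 ^ (n + 1) ≤ (k + 1) / 2 ^ n := by
  rw [div_le_div_iff₀ (by positivity) (by positivity), pow_succ]
  nlinarith [pow_pos (two_pos : (0 : ℝ) < 2) n]

lemma haar_succ (n k j : ℕ) (y : ℝ) :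
    haar (n + 1) (k + j * 2 ^ n) y = haar n k (2 * y - j) := by
  simp only [haar, two_mul_sub_mem_Ico_iff, dyadic_endpoint_succ]
  push_cast; ring_nf

lemma haar_eq_indicator (n k : ℕ) :
    haar n k = (Ico ((k : ℝ) / 2 ^ n) ((2 * k + 1) / 2 ^ (n + 1))).indicator (fun _ => -1) +
      (Ico ((2 * (k : ℝ) + 1) / 2 ^ (n + 1)) ((k + 1) / 2 ^ n)).indicator (fun _ => 1) := by
  funext x
  by_cases h₁ : x ∈ Ico ((k : ℝ) / 2 ^ n) ((2 * k + 1) / 2 ^ (n + 1))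
  · have h₂ : x ∉ Ico ((2 * (k : ℝ) + 1) / 2 ^ (n + 1)) ((k + 1) / 2 ^ n) :=
      fun h₂ => (lt_irrefl x) (h₁.2.trans_le h₂.1)
    simp [haar, h₁, h₂]
  · simp [haar, h₁, indicator_apply]

lemma haar_eq_zero_of_notMem {n k : ℕ} {x : ℝ}
    (hx : x ∉ Ico ((k : ℝ) / 2 ^ n) ((k + 1) / 2 ^ n)) : haar n k x = 0 := by
  have hm₁ := dyadic_left_le_mid n k
  have hm₂ := dyadic_mid_le_right n k
  simp only [mem_Ico, not_and_or, not_le, not_lt] at hx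
  simp only [haar, mem_Ico]
  split_ifs with h₁ h₂
  · rcases hx with hx | hx <;> linarith [h₁.1, h₁.2]
  · rcases hx with hx | hx <;> linarith [h₂.1, h₂.2]
  · rfl

lemma haar_zero_zero_of_mem_Ico_left {y : ℝ} (hy : y ∈ Ico 0 (1 / 2)) : haar 0 0 y = -1 := by
  have : y < 2⁻¹ := by linarith [hy.2]
  simp [haar, hy.1, this]

lemma haar_zero_zero_of_mem_Ico_right {y : ℝ} (hy : y ∈ Ico (1 / 2) 1) : haar 0 0 y = 1 := by
  have : 2⁻¹ ≤ y := by linarith [hy.1]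
  simp [haar, this, this.not_gt, hy.2]

lemma integrable_indicator_Ico_const (a b c : ℝ) : Integrable ((Ico a b).indicator fun _ => c) :=
  (integrableOn_const measure_Ico_lt_top.ne).integrable_indicator measurableSet_Ico

lemma integrable_haar (n k : ℕ) : Integrable (haar n k) := by
  rw [haar_eq_indicator]
  exact (integrable_indicator_Ico_const _ _ _).add (integrable_indicator_Ico_const _ _ _)

lemma abs_haar_le_one (n k : ℕ) (x : ℝ) : |haar n k x| ≤ 1 := by
  unfold haar; split_ifs <;> simp

lemma integral_haar (n k : ℕ) : ∫ x, haar n k x = 0 := by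
  rw [haar_eq_indicator]
  simp only [Pi.add_apply]
  rw [integral_add (integrable_indicator_Ico_const _ _ _) (integrable_indicator_Ico_const _ _ _),
    integral_indicator_const _ measurableSet_Ico, integral_indicator_const _ measurableSet_Ico,
    Real.volume_real_Ico_of_le (dyadic_left_le_mid n k),
    Real.volume_real_Ico_of_le (dyadic_mid_le_right n k)]
  field_simp; ring

lemma integrableOn_mul_haar {F : ℝ → ℝ} {s : Set ℝ} (hF : IntegrableOn F s) (n k : ℕ) :
    IntegrableOn (fun x => F x * haar n k x) s :=
  Integrable.mul_bdd hF (integrable_haar n k).aestronglyMeasurable.restrict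
    (Eventually.of_forall fun x => abs_haar_le_one n k x)

lemma setIntegral_Icc_mul_haar (F : ℝ → ℝ) {n k : ℕ} (hk : k < 2 ^ n) :
    ∫ x in Icc 0 1, F x * haar n k x = ∫ x, F x * haar n k x := by
  refine setIntegral_eq_integral_of_forall_compl_eq_zero fun x hx => ?_
  rw [haar_eq_zero_of_notMem fun h => hx (Ico_subset_Icc_self (Ico_dyadic_subset_Ico hk h)),
    mul_zero]

lemma setIntegral_Icc_mul_haar_eq_zero (F : ℝ → ℝ) {n k : ℕ} (hk : 2 ^ n ≤ k) :
    ∫ x in Icc 0 1, F x * haar n k x = 0 := by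
  have hk' : (1 : ℝ) ≤ k / 2 ^ n := by
    rw [one_le_div (by positivity)]; exact_mod_cast hk
  rw [integral_Icc_eq_integral_Ico]
  refine setIntegral_eq_zero_of_forall_eq_zero fun x hx => ?_
  rw [haar_eq_zero_of_notMem fun h => (hx.2.trans_le hk').not_ge h.1, mul_zero]

lemma setIntegral_haar (n k : ℕ) : ∫ x in Icc (0 : ℝ) 1, haar n k x = 0 := by
  rcases lt_or_ge k (2 ^ n) with hk | hk
  · simpa [integral_haar] using setIntegral_Icc_mul_haar (fun _ => 1) hk
  · simpa using setIntegral_Icc_mul_haar_eq_zero (fun _ => 1) hk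

lemma haarCoeff_congr {F G : ℝ → ℝ} {n k : ℕ}
    (h : EqOn F G (Ico ((k : ℝ) / 2 ^ n) ((k + 1) / 2 ^ n))) :
    haarCoeff F n k = haarCoeff G n k := by
  unfold haarCoeff
  congr 1
  refine integral_congr_ae (Eventually.of_forall fun x => ?_)
  by_cases hx : x ∈ Ico ((k : ℝ) / 2 ^ n) ((k + 1) / 2 ^ n)
  · simp only [h hx]
  · simp only [haar_eq_zero_of_notMem hx, mul_zero]

lemma haarCoeff_mul_add_const {F : ℝ → ℝ} (hF : IntegrableOn F (Icc 0 1)) (c a : ℝ) (n k : ℕ) :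
    haarCoeff (fun x => c * F x + a) n k = c * haarCoeff F n k := by
  simp only [haarCoeff, add_mul, mul_assoc]
  rw [integral_add ((integrableOn_mul_haar hF n k).const_mul c)
      ((integrable_haar n k).integrableOn.const_mul a),
    integral_const_mul, integral_const_mul, setIntegral_haar]
  ring

lemma haarCoeff_comp_two_mul_sub (u : ℝ → ℝ) {n k j : ℕ} (hj : j ≤ 1) (hk : k < 2 ^ n) :
    haarCoeff (fun y => u (2 * y - j)) (n + 1) (k + j * 2 ^ n) = haarCoeff u n k := by
  have hchild : k + j * 2 ^ n < 2 ^ (n + 1) := by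
    rw [pow_succ]; interval_cases j <;> omega
  rw [haarCoeff, haarCoeff, setIntegral_Icc_mul_haar _ hchild, setIntegral_Icc_mul_haar _ hk]
  simp only [haar_succ]
  rw [integral_comp_two_mul_sub (fun x => u x * haar n k x), pow_succ]
  ring

lemma haarCoeff_child_of_eqOn {F u : ℝ → ℝ} {n k j : ℕ} (hj : j ≤ 1) (hk : k < 2 ^ n)
    (h : EqOn F (fun y => u (2 * y - j)) ((fun y => 2 * y - j) ⁻¹' Ico 0 1)) :
    haarCoeff F (n + 1) (k + j * 2 ^ n) = haarCoeff u n k := by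
  rw [haarCoeff_congr (G := fun y => u (2 * y - j)), haarCoeff_comp_two_mul_sub u hj hk]
  exact fun y hy => h (Ico_dyadic_subset_Ico hk ((mem_Ico_dyadic_succ_iff n k j y).mp hy))

def sqFnSq (F : ℝ → ℝ) (x : ℝ) : ℝ :=
  ∑' p : ℕ × ℕ, (haarCoeff F p.1 p.2) ^ 2 * (dyadicI p.1 p.2).indicator 1 x

lemma sqFn_le_one_iff {F : ℝ → ℝ} {x : ℝ} : sqFn F x ≤ 1 ↔ sqFnSq F x ≤ 1 := Real.sqrt_le_one

lemma sqFnSq_nonneg (F : ℝ → ℝ) (x : ℝ) : 0 ≤ sqFnSq F x :=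
  tsum_nonneg fun _ => mul_nonneg (sq_nonneg _) (indicator_nonneg (fun _ _ => zero_le_one) _)

lemma ae_sqFnSq_le_one {F : ℝ → ℝ} (hF : Admissible F) :
    ∀ᵐ x, x ∈ Icc 0 1 → sqFnSq F x ≤ 1 := by
  rw [← ae_restrict_iff' measurableSet_Icc]
  filter_upwards [hF.2.2] with x hx using sqFn_le_one_iff.mp hx

/-- Only an inequality: when the series defining `sqFnSq F y` diverges, its `tsum` is `0`. -/
lemma sqFnSq_le_of_haarCoeff_children {F u : ℝ → ℝ} {c τ y : ℝ} {j : ℕ} (hj : j ≤ 1)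
    (hy₁ : j < 2 * y) (hy₂ : 2 * y < j + 1) (h₀ : haarCoeff F 0 0 = τ)
    (hchild : ∀ n k, k < 2 ^ n → haarCoeff F (n + 1) (k + j * 2 ^ n) = c * haarCoeff u n k) :
    sqFnSq F y ≤ τ ^ 2 + c ^ 2 * sqFnSq u (2 * y - j) := by
  set A : ℕ × ℕ → ℝ := fun p => (haarCoeff F p.1 p.2) ^ 2 * (dyadicI p.1 p.2).indicator 1 y
  by_cases hA : Summable A
  swap
  · rw [sqFnSq, tsum_eq_zero_of_not_summable hA]
    positivity [sqFnSq_nonneg u (2 * y - j)]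
  have hj' : (j : ℝ) ≤ 1 := by exact_mod_cast hj
  let e : ℕ × ℕ → ℕ × ℕ := fun p => (p.1 + 1, p.2 + j * 2 ^ p.1)
  have he : Function.Injective e := by
    rintro ⟨n, k⟩ ⟨n', k'⟩ h
    simp only [e, Prod.mk.injEq, add_left_inj] at h
    obtain ⟨rfl, h⟩ := h
    simp_all
  have hA₀ : A (0, 0) = τ ^ 2 := by
    have : y ∈ dyadicI 0 0 := by rw [dyadicI]; norm_num; constructor <;> linarith
    simp [A, h₀, indicator_of_mem this]
  have hAe (p : ℕ × ℕ) : A (e p) = c ^ 2 *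
      ((haarCoeff u p.1 p.2) ^ 2 * (dyadicI p.1 p.2).indicator 1 (2 * y - j)) := by
    simp only [A, e, indicator_dyadicI_succ]
    rcases lt_or_ge p.2 (2 ^ p.1) with hk | hk
    · rw [hchild _ _ hk]; ring
    · have : 2 * y - j ∉ dyadicI p.1 p.2 := fun h => hk.not_gt <| lt_of_mem_dyadicI h <| by
        push_cast; nlinarith [pow_pos (two_pos : (0 : ℝ) < 2) p.1]
      simp [indicator_of_notMem this]
  have hsupp : Function.support (fun p => if p = (0, 0) then 0 else A p) ⊆ range e := by
    intro p hp
    simp only [Function.mem_support, ne_eq, ite_eq_left_iff, not_forall] at hp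
    obtain ⟨hne, hAp⟩ := hp
    have hmem : y ∈ dyadicI p.1 p.2 := by
      by_contra h; exact hAp (by simp [A, indicator_of_notMem h])
    obtain ⟨m, i, h⟩ := exists_eq_child_of_mem_dyadicI hj hy₁ hy₂ hmem hne
    exact ⟨(m, i), h⟩
  rw [sqFnSq, hA.tsum_eq_add_tsum_ite (0, 0), ← he.tsum_eq hsupp, hA₀]
  simp only [e, Prod.mk.injEq, Nat.add_one_ne_zero, false_and, if_false]
  rw [tsum_congr fun p => hAe p, tsum_mul_left, sqFnSq]

def glue (c τ : ℝ) (f g : ℝ → ℝ) (y : ℝ) : ℝ :=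
  if y < 1 / 2 then c * f (2 * y) - τ else c * g (2 * y - 1) + τ

section glue

variable {c τ : ℝ} {f g : ℝ → ℝ}

-- Written with `+ -τ` to match the shape `c * F x + a` of `haarCoeff_mul_add_const`.
lemma glue_of_lt {y : ℝ} (hy : y < 1 / 2) : glue c τ f g y = c * f (2 * y) + -τ :=
  (if_pos hy).trans (sub_eq_add_neg _ _)

lemma glue_of_ge {y : ℝ} (hy : 1 / 2 ≤ y) : glue c τ f g y = c * g (2 * y - 1) + τ :=
  if_neg hy.not_gt

lemma integrableOn_glue (hf : IntegrableOn f (Icc 0 1)) (hg : IntegrableOn g (Icc 0 1)) :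
    IntegrableOn (glue c τ f g) (Icc 0 1) := by
  have hf' := integrableOn_comp_two_mul_sub (integrableOn_Ico_mul_add_const hf c (-τ)) 0
  have hg' := integrableOn_comp_two_mul_sub (integrableOn_Ico_mul_add_const hg c τ) 1
  norm_num at hf' hg'
  rw [integrableOn_Icc_iff_integrableOn_Ico, ← Ico_union_Ico_eq_Ico (b := 1 / 2) (by norm_num)
    (by norm_num)]
  exact (hf'.congr_fun (fun y hy => (glue_of_lt hy.2).symm) measurableSet_Ico).union
    (hg'.congr_fun (fun y hy => (glue_of_ge hy.1).symm) measurableSet_Ico)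

lemma setIntegral_glue_left (hf : IntegrableOn f (Icc 0 1)) (hf₀ : ∫ x in Icc 0 1, f x = 0) :
    ∫ y in Ico 0 (1 / 2), glue c τ f g y = -τ / 2 := by
  have h := setIntegral_Ico_comp_two_mul_sub (fun x => c * f x + -τ) 0
  rw [setIntegral_Ico_mul_add_const hf, hf₀] at h
  norm_num at h
  rw [setIntegral_congr_fun measurableSet_Ico fun y hy => glue_of_lt hy.2]
  linarith

lemma setIntegral_glue_right (hg : IntegrableOn g (Icc 0 1)) (hg₀ : ∫ x in Icc 0 1, g x = 0) :
    ∫ y in Ico (1 / 2) 1, glue c τ f g y = τ / 2 := by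
  have h := setIntegral_Ico_comp_two_mul_sub (fun x => c * g x + τ) 1
  rw [setIntegral_Ico_mul_add_const hg, hg₀] at h
  norm_num at h
  rw [setIntegral_congr_fun measurableSet_Ico fun y hy => glue_of_ge hy.1]
  linarith

lemma integral_glue (hf : IntegrableOn f (Icc 0 1)) (hg : IntegrableOn g (Icc 0 1))
    (hf₀ : ∫ x in Icc 0 1, f x = 0) (hg₀ : ∫ x in Icc 0 1, g x = 0) :
    ∫ y in Icc 0 1, glue c τ f g y = 0 := by
  rw [setIntegral_Icc_eq_halves (integrableOn_glue hf hg), setIntegral_glue_left hf hf₀,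
    setIntegral_glue_right hg hg₀]
  ring

lemma haarCoeff_glue_zero_zero (hf : IntegrableOn f (Icc 0 1)) (hg : IntegrableOn g (Icc 0 1))
    (hf₀ : ∫ x in Icc 0 1, f x = 0) (hg₀ : ∫ x in Icc 0 1, g x = 0) :
    haarCoeff (glue c τ f g) 0 0 = τ := by
  have hl : ∫ y in Ico 0 (1 / 2), glue c τ f g y * haar 0 0 y = τ / 2 := by
    rw [setIntegral_congr_fun measurableSet_Ico fun y hy => by
      rw [haar_zero_zero_of_mem_Ico_left hy, mul_neg_one], integral_neg,
      setIntegral_glue_left hf hf₀]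
    ring
  have hr : ∫ y in Ico (1 / 2) 1, glue c τ f g y * haar 0 0 y = τ / 2 := by
    rw [setIntegral_congr_fun measurableSet_Ico fun y hy => by
      rw [haar_zero_zero_of_mem_Ico_right hy, mul_one], setIntegral_glue_right hg hg₀]
  rw [haarCoeff, setIntegral_Icc_eq_halves (integrableOn_mul_haar (integrableOn_glue hf hg) 0 0),
    hl, hr]
  ring

lemma haarCoeff_glue_left (hf : IntegrableOn f (Icc 0 1)) {n k : ℕ} (hk : k < 2 ^ n) :
    haarCoeff (glue c τ f g) (n + 1) k = c * haarCoeff f n k := by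
  have h := haarCoeff_child_of_eqOn (F := glue c τ f g) (u := fun x => c * f x + -τ) (j := 0)
    zero_le_one hk fun y hy => by
      simp only [mem_preimage, mem_Ico, Nat.cast_zero, sub_zero] at hy ⊢
      exact glue_of_lt (by linarith)
  simpa [haarCoeff_mul_add_const hf] using h

lemma haarCoeff_glue_right (hg : IntegrableOn g (Icc 0 1)) {n k : ℕ} (hk : k < 2 ^ n) :
    haarCoeff (glue c τ f g) (n + 1) (k + 2 ^ n) = c * haarCoeff g n k := by
  have h := haarCoeff_child_of_eqOn (F := glue c τ f g) (u := fun x => c * g x + τ) (j := 1)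
    le_rfl hk fun y hy => by
      simp only [mem_preimage, mem_Ico, Nat.cast_one] at hy ⊢
      exact glue_of_ge (by linarith)
  simpa [haarCoeff_mul_add_const hg] using h

lemma ae_sqFn_glue_le_one (hf : Admissible f) (hg : Admissible g) (hc : c ^ 2 + τ ^ 2 = 1) :
    ∀ᵐ y ∂volume.restrict (Icc 0 1), sqFn (glue c τ f g) y ≤ 1 := by
  have h₀ := haarCoeff_glue_zero_zero (c := c) (τ := τ) hf.1 hg.1 hf.2.1 hg.2.1
  have hfin : ∀ᵐ y : ℝ, y ∉ ({0, 1 / 2, 1} : Set ℝ) :=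
    measure_eq_zero_iff_ae_notMem.mp ((toFinite _).measure_zero _)
  rw [ae_restrict_iff' measurableSet_Icc]
  filter_upwards [ae_comp_two_mul_sub (ae_sqFnSq_le_one hf) 0,
    ae_comp_two_mul_sub (ae_sqFnSq_le_one hg) 1, hfin] with y hfy hgy hy hmem
  simp only [mem_insert_iff, mem_singleton_iff, not_or] at hy
  obtain ⟨hy₀, hy₁, hy₂⟩ := hy
  rw [sqFn_le_one_iff]
  rcases lt_or_gt_of_ne hy₁ with hlt | hgt
  · have hpos : 0 < y := lt_of_le_of_ne hmem.1 (Ne.symm hy₀)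
    have h := sqFnSq_le_of_haarCoeff_children (u := f) (c := c) (j := 0) zero_le_one
      (by push_cast; linarith) (by push_cast; linarith) h₀
      fun n k hk => by simpa using haarCoeff_glue_left hf.1 hk
    have := hfy ⟨by linarith, by linarith⟩
    push_cast at h this
    nlinarith [sq_nonneg c]
  · have hlt1 : y < 1 := lt_of_le_of_ne hmem.2 hy₂
    have h := sqFnSq_le_of_haarCoeff_children (u := g) (c := c) (j := 1) le_rfl
      (by push_cast; linarith) (by push_cast; linarith) h₀
      fun n k hk => by simpa using haarCoeff_glue_right hg.1 hk
    have := hgy ⟨by linarith, by linarith⟩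
    push_cast at h this
    nlinarith [sq_nonneg c]

lemma admissible_glue (hf : Admissible f) (hg : Admissible g) (hc : c ^ 2 + τ ^ 2 = 1) :
    Admissible (glue c τ f g) :=
  ⟨integrableOn_glue hf.1 hg.1, integral_glue hf.1 hg.1 hf.2.1 hg.2.1,
    ae_sqFn_glue_le_one hf hg hc⟩

lemma volume_sep_Icc_eq_Ico (P : ℝ → Prop) :
    volume {y ∈ Icc (0 : ℝ) 1 | P y} = volume {y ∈ Ico (0 : ℝ) 1 | P y} :=
  measure_congr (Ico_ae_eq_Icc.symm.inter EventuallyEq.rfl)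

lemma volume_glue (hc : 0 < c) (x : ℝ) :
    volume {y ∈ Icc 0 1 | x ≤ glue c τ f g y} =
      volume {z ∈ Icc 0 1 | (x + τ) / c ≤ f z} / 2 +
        volume {z ∈ Icc 0 1 | (x - τ) / c ≤ g z} / 2 := by
  simp only [volume_sep_Icc_eq_Ico]
  rw [← measure_inter_add_sdiff _ (measurableSet_Ico (a := (0 : ℝ)) (b := 1 / 2)),
    ← volume_preimage_two_mul_sub 0, ← volume_preimage_two_mul_sub 1]
  congr 2 <;> ext y <;>
    simp only [mem_inter_iff, Set.mem_sdiff, mem_preimage, mem_Ico, div_le_iff₀ hc, sub_zero]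
  · constructor
    · rintro ⟨⟨⟨h₀, -⟩, hx⟩, -, h₁⟩
      rw [glue_of_lt h₁] at hx
      exact ⟨⟨by linarith, by linarith⟩, by linarith⟩
    · rintro ⟨⟨h₀, h₁⟩, hx⟩
      refine ⟨⟨⟨by linarith, by linarith⟩, ?_⟩, by linarith, by linarith⟩
      rw [glue_of_lt (by linarith)]; linarith
  · constructor
    · rintro ⟨⟨⟨h₀, h₁⟩, hx⟩, h₂⟩
      have h₂ : 1 / 2 ≤ y := by by_contra h; exact h₂ ⟨h₀, not_le.mp h⟩
      rw [glue_of_ge h₂] at hx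
      exact ⟨⟨by linarith, by linarith⟩, by linarith⟩
    · rintro ⟨⟨h₀, h₁⟩, hx⟩
      refine ⟨⟨⟨by linarith, by linarith⟩, ?_⟩, fun h => by linarith [h.2]⟩
      rw [glue_of_ge (by linarith)]; linarith

lemma measureReal_glue (hc : 0 < c) (x : ℝ) :
    volume.real {y ∈ Icc 0 1 | x ≤ glue c τ f g y} =
      (volume.real {z ∈ Icc 0 1 | (x + τ) / c ≤ f z} +
        volume.real {z ∈ Icc 0 1 | (x - τ) / c ≤ g z}) / 2 := by
  have hfin (P : ℝ → Prop) : volume {y ∈ Icc (0 : ℝ) 1 | P y} / 2 ≠ ⊤ :=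
    ENNReal.div_ne_top ((measure_mono (sep_subset _ _)).trans_lt measure_Icc_lt_top).ne two_ne_zero
  simp only [measureReal_def]
  rw [volume_glue hc, ENNReal.toReal_add (hfin _) (hfin _), ENNReal.toReal_div, ENNReal.toReal_div,
    ENNReal.toReal_ofNat]
  ring

end glue

lemma admissible_zero : Admissible 0 :=
  ⟨integrableOn_zero, by simp, Eventually.of_forall fun x => by simp [sqFn, haarCoeff]⟩

lemma bellman_eq_iSup (x : ℝ) :
    bellman x = ⨆ f : {f // Admissible f}, volume.real {y ∈ Icc 0 1 | x ≤ f.1 y} := by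
  rw [bellman, iSup]
  congr 1
  ext m
  simp [eq_comm, measureReal_def]

lemma bddAbove_bellman_range (x : ℝ) :
    BddAbove (range fun f : {f // Admissible f} => volume.real {y ∈ Icc 0 1 | x ≤ f.1 y}) := by
  refine ⟨1, ?_⟩
  rintro _ ⟨f, rfl⟩
  calc volume.real {y ∈ Icc 0 1 | x ≤ f.1 y} ≤ volume.real (Icc (0 : ℝ) 1) :=
        measureReal_mono (sep_subset _ _) measure_Icc_lt_top.ne
    _ = 1 := by simp

theorem bellman_inequality :
    ∀ x : ℝ, ∀ τ ∈ Set.Ioo (-1 : ℝ) 1,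
      (bellman (XX x (-τ)) + bellman (XX x τ)) / 2 ≤ bellman x := by
  intro x τ hτ
  have hτ' : 0 < 1 - τ ^ 2 := by nlinarith [hτ.1, hτ.2]
  set c := √(1 - τ ^ 2) with hc_def
  have hc : 0 < c := Real.sqrt_pos.mpr hτ'
  have hcτ : c ^ 2 + τ ^ 2 = 1 := by rw [Real.sq_sqrt hτ'.le]; ring
  have hX : XX x (-τ) = (x - τ) / c ∧ XX x τ = (x + τ) / c := by
    simp [XX, hc_def, sub_eq_add_neg]
  have : Nonempty {f // Admissible f} := ⟨⟨0, admissible_zero⟩⟩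
  rw [bellman_eq_iSup, bellman_eq_iSup, bellman_eq_iSup, hX.1, hX.2, div_le_iff₀ two_pos]
  refine ciSup_add_ciSup_le fun g f => ?_
  have hglue := le_ciSup (bddAbove_bellman_range x) ⟨_, admissible_glue f.2 g.2 hcτ⟩
  rw [measureReal_glue hc] at hglue
  linarith
end
end

section
/- 𝓑(1) = 1/2. -/
open MeasureTheory

noncomputable section

open Set Filter Topology

/-!
The value `1 / 2` is attained by `h_I = haar 0 0`, whose only nonzero Haar coefficient is
`a_I = 1`. Conversely, `Sf ≤ 1` forces `∫ f² ≤ 1`: along the dyadic martingale of `f` (averages over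
dyadic intervals) the Parseval identity bounds the `L²` norms of the averages by the square
function, and Fatou's lemma with Lebesgue differentiation passes to `f`. Cantelli's inequality for
the centred `f` then gives `μ{f ≥ 1} ≤ 1 / 2`.

The catch is that `sqFn` is a `tsum`, which is `0` where the series diverges, so `Sf ≤ 1` says
nothing there. A stopping-time argument shows that the dyadic square function of an integrable
function is finite almost everywhere: stopped before its averages or jumps exceed `λ`, the
martingale stays bounded, so its square function is square integrable; and since the averages
converge almost everywhere, almost every point is never stopped for some `λ`.
-/

namespace DyadicBellman

lemma meas_ge_le_cantelli {Ω : Type*} [MeasurableSpace Ω] {μ : Measure Ω}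
    [IsProbabilityMeasure μ] {X : Ω → ℝ} (hX : MemLp X 2 μ) (hmean : ∫ ω, X ω ∂μ = 0) {t : ℝ}
    (ht : 0 < t) :
    μ.real {ω | t ≤ X ω} ≤ (∫ ω, X ω ^ 2 ∂μ) / (∫ ω, X ω ^ 2 ∂μ + t ^ 2) := by
  set m := ∫ ω, X ω ^ 2 ∂μ
  have hm : 0 ≤ m := integral_nonneg fun ω => sq_nonneg (X ω)
  -- Markov's inequality for `(X + s) ^ 2` with the optimal shift `s = m / t`
  set s := m / t
  have hs : 0 ≤ s := div_nonneg hm ht.le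
  have hexpand : (fun ω => (X ω + s) ^ 2) = fun ω => X ω ^ 2 + (2 * s * X ω + s ^ 2) :=
    funext fun ω => by ring
  have hlin : Integrable (fun ω => 2 * s * X ω + s ^ 2) μ :=
    ((hX.integrable one_le_two).const_mul _).add (integrable_const _)
  have hint : Integrable (fun ω => (X ω + s) ^ 2) μ := hexpand ▸ hX.integrable_sq.add hlin
  have hshift : ∫ ω, (X ω + s) ^ 2 ∂μ = m + s ^ 2 := by
    rw [hexpand, integral_add hX.integrable_sq hlin,
      integral_add ((hX.integrable one_le_two).const_mul _) (integrable_const _),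
      integral_const_mul, hmean]
    simp [m]
  have hsub : {ω | t ≤ X ω} ⊆ {ω | (t + s) ^ 2 ≤ (X ω + s) ^ 2} :=
    fun ω (hω : t ≤ X ω) => show (t + s) ^ 2 ≤ (X ω + s) ^ 2 from
      pow_le_pow_left₀ (by linarith) (by linarith) 2
  have hmarkov := mul_meas_ge_le_integral_of_nonneg
    (ae_of_all μ fun ω => sq_nonneg (X ω + s) : 0 ≤ᵐ[μ] fun ω => (X ω + s) ^ 2) hint
    ((t + s) ^ 2)
  have hts : 0 < (t + s) ^ 2 := by positivity
  calc μ.real {ω | t ≤ X ω} ≤ μ.real {ω | (t + s) ^ 2 ≤ (X ω + s) ^ 2} :=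
        measureReal_mono hsub
    _ ≤ (m + s ^ 2) / (t + s) ^ 2 := by rw [le_div_iff₀ hts, ← hshift]; linarith
    _ = m / (m + t ^ 2) := by
        simp only [s]
        field_simp
        ring

def dyadicIco (n k : ℕ) : Set ℝ := Ico ((k : ℝ) / 2 ^ n) (((k : ℝ) + 1) / 2 ^ n)

def dyadicIndex (n : ℕ) (x : ℝ) : ℕ := ⌊(2 : ℝ) ^ n * x⌋₊

lemma mem_dyadicIco_iff {n k : ℕ} {x : ℝ} :
    x ∈ dyadicIco n k ↔ 0 ≤ x ∧ dyadicIndex n x = k := by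
  have h2 : (0 : ℝ) < 2 ^ n := by positivity
  simp only [dyadicIco, mem_Ico, div_le_iff₀ h2, lt_div_iff₀ h2, dyadicIndex]
  constructor
  · rintro ⟨hl, hr⟩
    have hx : 0 ≤ 2 ^ n * x := by rw [mul_comm]; exact (Nat.cast_nonneg k).trans hl
    refine ⟨nonneg_of_mul_nonneg_right hx h2, (Nat.floor_eq_iff hx).2 ⟨?_, ?_⟩⟩ <;> linarith
  · rintro ⟨hx, rfl⟩
    have hx' : 0 ≤ 2 ^ n * x := by positivity
    constructor
    · have := Nat.floor_le hx'; linarith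
    · rw [mul_comm]; exact Nat.lt_floor_add_one _

lemma mem_dyadicIco_dyadicIndex {x : ℝ} (hx : 0 ≤ x) (n : ℕ) :
    x ∈ dyadicIco n (dyadicIndex n x) :=
  mem_dyadicIco_iff.2 ⟨hx, rfl⟩

lemma dyadicIndex_lt {x : ℝ} (hx : x ∈ Ico (0 : ℝ) 1) (n : ℕ) : dyadicIndex n x < 2 ^ n := by
  have h : (2 : ℝ) ^ n * x < ((2 ^ n : ℕ) : ℝ) := by
    push_cast
    nlinarith [hx.2, pow_pos (two_pos (α := ℝ)) n]
  exact (Nat.floor_lt (by nlinarith [hx.1, pow_pos (two_pos (α := ℝ)) n])).2 h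

lemma dyadicIndex_add_div_pow (m n : ℕ) (x : ℝ) :
    dyadicIndex (m + n) x / 2 ^ n = dyadicIndex m x := by
  rw [dyadicIndex, dyadicIndex, ← Nat.floor_div_natCast]
  congr 1
  push_cast
  rw [pow_add]
  field_simp

lemma dyadicIndex_succ_div_two (n : ℕ) (x : ℝ) :
    dyadicIndex (n + 1) x / 2 = dyadicIndex n x := by
  simpa using dyadicIndex_add_div_pow n 1 x

lemma dyadicIco_eq_union (n k : ℕ) :
    dyadicIco n k = dyadicIco (n + 1) (2 * k) ∪ dyadicIco (n + 1) (2 * k + 1) := by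
  ext x
  simp only [mem_union, mem_dyadicIco_iff, ← dyadicIndex_succ_div_two n x]
  rw [← and_or_left]
  exact and_congr_right fun _ => by omega

lemma disjoint_dyadicIco {n k l : ℕ} (h : k ≠ l) : Disjoint (dyadicIco n k) (dyadicIco n l) :=
  disjoint_left.2 fun _ hk hl =>
    h <| (mem_dyadicIco_iff.1 hk).2.symm.trans (mem_dyadicIco_iff.1 hl).2

lemma dyadicIco_subset_Ico {n k : ℕ} (hk : k < 2 ^ n) : dyadicIco n k ⊆ Ico (0 : ℝ) 1 := by
  intro x hx
  refine ⟨(mem_dyadicIco_iff.1 hx).1, hx.2.trans_le ?_⟩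
  rw [div_le_one (by positivity)]
  exact_mod_cast hk

lemma measurableSet_dyadicIco (n k : ℕ) : MeasurableSet (dyadicIco n k) := measurableSet_Ico

lemma volume_real_dyadicIco (n k : ℕ) : volume.real (dyadicIco n k) = ((2 : ℝ) ^ n)⁻¹ := by
  rw [dyadicIco, Real.volume_real_Ico_of_le (by gcongr; linarith)]
  field_simp
  ring

lemma volume_dyadicIco_ne_top (n k : ℕ) : volume (dyadicIco n k) ≠ ⊤ := by
  rw [dyadicIco, Real.volume_Ico]
  exact ENNReal.ofReal_ne_top

lemma dyadicIco_succ_two_mul (n k : ℕ) :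
    dyadicIco (n + 1) (2 * k) = Ico ((k : ℝ) / 2 ^ n) ((2 * k + 1) / 2 ^ (n + 1)) := by
  rw [dyadicIco, pow_succ]
  push_cast
  congr 1
  field_simp

lemma dyadicIco_succ_two_mul_add_one (n k : ℕ) :
    dyadicIco (n + 1) (2 * k + 1) = Ico ((2 * k + 1 : ℝ) / 2 ^ (n + 1)) ((k + 1) / 2 ^ n) := by
  rw [dyadicIco, pow_succ]
  push_cast
  congr 1
  field_simp
  ring

def dyadicStep (n : ℕ) (w : ℕ → ℝ) (x : ℝ) : ℝ :=
  ∑ k ∈ Finset.range (2 ^ n), (dyadicIco n k).indicator (fun _ => w k) x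

def levelMean (n : ℕ) (w : ℕ → ℝ) : ℝ := ∑ k ∈ Finset.range (2 ^ n), w k / 2 ^ n

section DyadicStep

variable {n : ℕ} {w : ℕ → ℝ} {x : ℝ}

lemma dyadicStep_of_mem (hx : x ∈ Ico (0 : ℝ) 1) :
    dyadicStep n w x = w (dyadicIndex n x) := by
  rw [dyadicStep, Finset.sum_eq_single_of_mem _ (Finset.mem_range.2 (dyadicIndex_lt hx n))]
  · exact indicator_of_mem (mem_dyadicIco_dyadicIndex hx.1 n) _
  · exact fun k _ hk => indicator_of_notMem (fun h => hk (mem_dyadicIco_iff.1 h).2.symm) _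

lemma dyadicStep_of_notMem (hx : x ∉ Ico (0 : ℝ) 1) : dyadicStep n w x = 0 :=
  Finset.sum_eq_zero fun _ hk =>
    indicator_of_notMem (fun h => hx (dyadicIco_subset_Ico (Finset.mem_range.1 hk) h)) _

lemma dyadicStep_nonneg (hw : ∀ k, 0 ≤ w k) : 0 ≤ dyadicStep n w x :=
  Finset.sum_nonneg fun k _ => indicator_nonneg (fun _ _ => hw k) x

lemma measurable_dyadicStep : Measurable (dyadicStep n w) :=
  Finset.measurable_sum _ fun k _ => measurable_const.indicator (measurableSet_dyadicIco n k)

lemma integrable_dyadicStep : Integrable (dyadicStep n w) :=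
  integrable_finsetSum _ fun k _ =>
    (integrable_indicator_iff (measurableSet_dyadicIco n k)).2
      (integrableOn_const (volume_dyadicIco_ne_top n k))

lemma integral_dyadicStep : ∫ x, dyadicStep n w x = levelMean n w := by
  unfold dyadicStep
  rw [integral_finsetSum _ fun k _ =>
    (integrable_indicator_iff (measurableSet_dyadicIco n k)).2
      (integrableOn_const (volume_dyadicIco_ne_top n k))]
  refine Finset.sum_congr rfl fun k _ => ?_
  rw [integral_indicator_const _ (measurableSet_dyadicIco n k), volume_real_dyadicIco,
    smul_eq_mul, inv_mul_eq_div]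

lemma lintegral_ofReal_dyadicStep (hw : ∀ k, 0 ≤ w k) :
    ∫⁻ x, ENNReal.ofReal (dyadicStep n w x) = ENNReal.ofReal (levelMean n w) := by
  rw [← ofReal_integral_eq_lintegral_ofReal integrable_dyadicStep
    (Eventually.of_forall fun _ => dyadicStep_nonneg hw), integral_dyadicStep]

end DyadicStep

lemma sum_range_two_mul {M : Type*} [AddCommMonoid M] (u : ℕ → M) (m : ℕ) :
    ∑ k ∈ Finset.range (2 * m), u k = ∑ j ∈ Finset.range m, (u (2 * j) + u (2 * j + 1)) := by
  induction m with
  | zero => simp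
  | succ m ih =>
    rw [show 2 * (m + 1) = 2 * m + 1 + 1 by ring, Finset.sum_range_succ, Finset.sum_range_succ,
      ih, Finset.sum_range_succ, add_assoc]

lemma levelMean_succ (n : ℕ) (w : ℕ → ℝ) :
    levelMean (n + 1) w = levelMean n fun k => (w (2 * k) + w (2 * k + 1)) / 2 := by
  rw [levelMean, levelMean, pow_succ', sum_range_two_mul]
  refine Finset.sum_congr rfl fun k _ => ?_
  rw [pow_succ']
  field_simp

lemma levelMean_le {n : ℕ} {w : ℕ → ℝ} {c : ℝ} (h : ∀ k < 2 ^ n, w k ≤ c) :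
    levelMean n w ≤ c := by
  calc levelMean n w ≤ ∑ _k ∈ Finset.range (2 ^ n), c / 2 ^ n :=
        Finset.sum_le_sum fun k hk => by gcongr; exact h k (Finset.mem_range.1 hk)
    _ = c := by
        rw [Finset.sum_const, Finset.card_range, nsmul_eq_mul]
        push_cast
        field_simp

lemma levelMean_nonneg {n : ℕ} {w : ℕ → ℝ} (hw : ∀ k, 0 ≤ w k) : 0 ≤ levelMean n w :=
  Finset.sum_nonneg fun k _ => div_nonneg (hw k) (by positivity)

section Averages

variable (φ : ℝ → ℝ)

def dyadicAvg (n k : ℕ) : ℝ := 2 ^ n * ∫ x in dyadicIco n k, φ x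

/-- On `[0, 1]` this is the Haar coefficient `a_J` of `φ` at `J = dyadicIco n k`
(`haarCoeff_eq_dyadicJump`). -/
def dyadicJump (n k : ℕ) : ℝ :=
  (dyadicAvg φ (n + 1) (2 * k + 1) - dyadicAvg φ (n + 1) (2 * k)) / 2

variable {φ}

lemma integrableOn_dyadicIco (hφ : LocallyIntegrable φ) (n k : ℕ) :
    IntegrableOn φ (dyadicIco n k) :=
  (hφ.integrableOn_isCompact isCompact_Icc).mono_set Ico_subset_Icc_self

lemma dyadicAvg_eq_add_div_two (hφ : LocallyIntegrable φ) (n k : ℕ) :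
    dyadicAvg φ n k = (dyadicAvg φ (n + 1) (2 * k) + dyadicAvg φ (n + 1) (2 * k + 1)) / 2 := by
  rw [dyadicAvg, dyadicIco_eq_union n k, setIntegral_union (disjoint_dyadicIco (by omega))
    (measurableSet_dyadicIco _ _) (integrableOn_dyadicIco hφ _ _)
    (integrableOn_dyadicIco hφ _ _), dyadicAvg, dyadicAvg, pow_succ]
  ring

lemma dyadicAvg_two_mul (hφ : LocallyIntegrable φ) (n k : ℕ) :
    dyadicAvg φ (n + 1) (2 * k) = dyadicAvg φ n k - dyadicJump φ n k := by
  rw [dyadicAvg_eq_add_div_two hφ n k, dyadicJump]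
  ring

lemma dyadicAvg_two_mul_add_one (hφ : LocallyIntegrable φ) (n k : ℕ) :
    dyadicAvg φ (n + 1) (2 * k + 1) = dyadicAvg φ n k + dyadicJump φ n k := by
  rw [dyadicAvg_eq_add_div_two hφ n k, dyadicJump]
  ring

lemma abs_dyadicAvg_succ_sub (hφ : LocallyIntegrable φ) (n j : ℕ) :
    |dyadicAvg φ (n + 1) j - dyadicAvg φ n (j / 2)| = |dyadicJump φ n (j / 2)| := by
  obtain ⟨k, rfl | rfl⟩ : ∃ k, j = 2 * k ∨ j = 2 * k + 1 := ⟨j / 2, by omega⟩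
  · rw [Nat.mul_div_cancel_left k two_pos, dyadicAvg_two_mul hφ, sub_sub_cancel_left, abs_neg]
  · rw [show (2 * k + 1) / 2 = k by omega, dyadicAvg_two_mul_add_one hφ, add_sub_cancel_left]

lemma dyadicAvg_eq_of_eqOn {n k : ℕ} {c : ℝ} (h : EqOn φ (fun _ => c) (dyadicIco n k)) :
    dyadicAvg φ n k = c := by
  rw [dyadicAvg, setIntegral_congr_fun (measurableSet_dyadicIco n k) h, setIntegral_const,
    volume_real_dyadicIco, smul_eq_mul, ← mul_assoc, mul_inv_cancel₀ (by positivity), one_mul]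

lemma levelMean_sq_dyadicAvg (hφ : LocallyIntegrable φ) (N : ℕ) :
    levelMean N (fun k => dyadicAvg φ N k ^ 2)
      = dyadicAvg φ 0 0 ^ 2
        + ∑ n ∈ Finset.range N, levelMean n fun k => dyadicJump φ n k ^ 2 := by
  induction N with
  | zero => simp [levelMean]
  | succ N ih =>
    rw [Finset.sum_range_succ, ← add_assoc, ← ih, levelMean_succ, levelMean, levelMean,
      levelMean, ← Finset.sum_add_distrib]
    refine Finset.sum_congr rfl fun k _ => ?_
    rw [dyadicAvg_two_mul hφ, dyadicAvg_two_mul_add_one hφ]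
    ring

lemma closedBall_eq_Icc_dyadic (n k : ℕ) :
    Metric.closedBall ((2 * k + 1 : ℝ) / 2 ^ (n + 1)) ((2 : ℝ) ^ (n + 1))⁻¹
      = Icc ((k : ℝ) / 2 ^ n) ((k + 1) / 2 ^ n) := by
  rw [Real.closedBall_eq_Icc, pow_succ]
  congr 1 <;> field_simp <;> ring

lemma ae_tendsto_dyadicAvg (hφ : LocallyIntegrable φ) :
    ∀ᵐ x, 0 ≤ x → Tendsto (fun n => dyadicAvg φ n (dyadicIndex n x)) atTop (𝓝 (φ x)) := by
  filter_upwards [IsUnifLocDoublingMeasure.ae_tendsto_average volume hφ 1] with x hx hx0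
  have hradius : Tendsto (fun n : ℕ => ((2 : ℝ) ^ (n + 1))⁻¹) atTop (𝓝[>] 0) := by
    refine tendsto_nhdsWithin_of_tendsto_nhds_of_eventually_within _ ?_
      (Eventually.of_forall fun n => mem_Ioi.2 (by positivity))
    simp_rw [← inv_pow]
    exact (tendsto_pow_atTop_nhds_zero_of_lt_one (by norm_num) (by norm_num)).comp
      (tendsto_add_atTop_nat 1)
  refine (hx (fun n => (2 * dyadicIndex n x + 1 : ℝ) / 2 ^ (n + 1)) _ hradius
    (Eventually.of_forall fun n => ?_)).congr fun n => ?_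
  · rw [one_mul, closedBall_eq_Icc_dyadic]
    exact Ico_subset_Icc_self (mem_dyadicIco_dyadicIndex hx0 n)
  · rw [closedBall_eq_Icc_dyadic, setAverage_eq, integral_Icc_eq_integral_Ico,
      measureReal_congr Ico_ae_eq_Icc.symm]
    rw [← dyadicIco, volume_real_dyadicIco, inv_inv, smul_eq_mul, dyadicAvg]

end Averages

section Stopping

variable (φ : ℝ → ℝ) (lam : ℝ)

def AncestorsBounded : ℕ → ℕ → Prop
  | 0, k => |dyadicAvg φ 0 k| ≤ lam ∧ |dyadicJump φ 0 k| ≤ lam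
  | n + 1, k => AncestorsBounded n (k / 2) ∧ |dyadicAvg φ (n + 1) k| ≤ lam ∧
      |dyadicJump φ (n + 1) k| ≤ lam

open Classical in
def stoppedAvg : ℕ → ℕ → ℝ
  | 0, k => dyadicAvg φ 0 k
  | n + 1, k => if AncestorsBounded φ lam n (k / 2) then dyadicAvg φ (n + 1) k
      else stoppedAvg n (k / 2)

open Classical in
/-- The squared increments of `stoppedAvg`. -/
def stoppedJumpSq (n k : ℕ) : ℝ :=
  if AncestorsBounded φ lam n k then dyadicJump φ n k ^ 2 else 0

variable {φ lam}

lemma AncestorsBounded.abs_le {n k : ℕ} (h : AncestorsBounded φ lam n k) :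
    |dyadicAvg φ n k| ≤ lam ∧ |dyadicJump φ n k| ≤ lam := by
  cases n with
  | zero => exact h
  | succ n => exact h.2

lemma ancestorsBounded_dyadicIndex {x : ℝ}
    (h : ∀ m, |dyadicAvg φ m (dyadicIndex m x)| ≤ lam ∧ |dyadicJump φ m (dyadicIndex m x)| ≤ lam)
    (n : ℕ) : AncestorsBounded φ lam n (dyadicIndex n x) := by
  induction n with
  | zero => exact h 0
  | succ n ih =>
    refine ⟨?_, h (n + 1)⟩
    rwa [← dyadicIndex_succ_div_two n x] at ih

lemma stoppedJumpSq_nonneg (n k : ℕ) : 0 ≤ stoppedJumpSq φ lam n k := by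
  unfold stoppedJumpSq
  split_ifs <;> positivity

lemma abs_stoppedAvg_le (hφ : LocallyIntegrable φ) (hlam : 0 ≤ lam) {n k : ℕ}
    (hk : k < 2 ^ n) :
    |stoppedAvg φ lam n k| ≤ |dyadicAvg φ 0 0| + 2 * lam := by
  induction n generalizing k with
  | zero =>
    obtain rfl : k = 0 := by simpa using hk
    simp [stoppedAvg, hlam]
  | succ n ih =>
    rw [stoppedAvg]
    split_ifs with hb
    · obtain ⟨havg, hjump⟩ := hb.abs_le
      have hstep := abs_dyadicAvg_succ_sub hφ n k
      linarith [abs_sub_abs_le_abs_sub (dyadicAvg φ (n + 1) k) (dyadicAvg φ n (k / 2)),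
        abs_nonneg (dyadicAvg φ 0 0)]
    · exact ih (by rw [pow_succ] at hk; omega)

lemma stoppedAvg_of_ancestorsBounded {n k : ℕ} (h : AncestorsBounded φ lam n k) :
    stoppedAvg φ lam n k = dyadicAvg φ n k := by
  cases n with
  | zero => rfl
  | succ n => rw [stoppedAvg, if_pos h.1]

open Classical in
lemma levelMean_sq_stoppedAvg_succ (hφ : LocallyIntegrable φ) (n : ℕ) :
    levelMean (n + 1) (fun k => stoppedAvg φ lam (n + 1) k ^ 2)
      = levelMean n (fun k => stoppedAvg φ lam n k ^ 2)
        + levelMean n (stoppedJumpSq φ lam n) := by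
  rw [levelMean_succ, levelMean, levelMean, levelMean, ← Finset.sum_add_distrib]
  refine Finset.sum_congr rfl fun k _ => ?_
  have h0 : 2 * k / 2 = k := by omega
  have h1 : (2 * k + 1) / 2 = k := by omega
  have hsucc : ∀ j, stoppedAvg φ lam (n + 1) j = if AncestorsBounded φ lam n (j / 2) then
      dyadicAvg φ (n + 1) j else stoppedAvg φ lam n (j / 2) := fun j => rfl
  simp only [hsucc, stoppedJumpSq, h0, h1]
  split_ifs with hb
  · rw [dyadicAvg_two_mul hφ, dyadicAvg_two_mul_add_one hφ, stoppedAvg_of_ancestorsBounded hb]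
    ring
  · ring

/-- The stopped martingale is bounded, so its square function is square integrable. -/
lemma sum_levelMean_stoppedJumpSq_le (hφ : LocallyIntegrable φ) (hlam : 0 ≤ lam) (N : ℕ) :
    ∑ n ∈ Finset.range N, levelMean n (stoppedJumpSq φ lam n)
      ≤ (|dyadicAvg φ 0 0| + 2 * lam) ^ 2 := by
  have htelescope : ∑ n ∈ Finset.range N, levelMean n (stoppedJumpSq φ lam n)
      = levelMean N (fun k => stoppedAvg φ lam N k ^ 2)
        - levelMean 0 (fun k => stoppedAvg φ lam 0 k ^ 2) := by
    rw [← Finset.sum_range_sub (fun n => levelMean n fun k => stoppedAvg φ lam n k ^ 2)]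
    exact Finset.sum_congr rfl fun n _ => by rw [levelMean_sq_stoppedAvg_succ hφ]; ring
  have hbound :
      levelMean N (fun k => stoppedAvg φ lam N k ^ 2) ≤ (|dyadicAvg φ 0 0| + 2 * lam) ^ 2 :=
    levelMean_le fun k hk => by
      rw [← sq_abs]
      exact pow_le_pow_left₀ (abs_nonneg _) (abs_stoppedAvg_le hφ hlam hk) 2
  rw [htelescope]
  linarith [levelMean_nonneg (n := 0) fun k => sq_nonneg (stoppedAvg φ lam 0 k)]

lemma lintegral_tsum_stoppedJumpSq_le (hφ : LocallyIntegrable φ) (hlam : 0 ≤ lam) :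
    ∫⁻ x, ∑' n, ENNReal.ofReal (dyadicStep n (stoppedJumpSq φ lam n) x)
      ≤ ENNReal.ofReal ((|dyadicAvg φ 0 0| + 2 * lam) ^ 2) := by
  rw [lintegral_tsum fun n => measurable_dyadicStep.ennreal_ofReal.aemeasurable]
  refine ENNReal.tsum_le_of_sum_range_le fun N => ?_
  simp_rw [lintegral_ofReal_dyadicStep (stoppedJumpSq_nonneg _)]
  rw [← ENNReal.ofReal_sum_of_nonneg fun n _ => levelMean_nonneg (stoppedJumpSq_nonneg n)]
  exact ENNReal.ofReal_le_ofReal (sum_levelMean_stoppedJumpSq_le hφ hlam N)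

lemma ae_summable_of_ancestorsBounded (hφ : LocallyIntegrable φ) (hlam : 0 ≤ lam) :
    ∀ᵐ x, x ∈ Ico (0 : ℝ) 1 → (∀ n, AncestorsBounded φ lam n (dyadicIndex n x)) →
      Summable fun n => dyadicJump φ n (dyadicIndex n x) ^ 2 := by
  have hfinite := ae_lt_top (Measurable.tsum fun n => measurable_dyadicStep.ennreal_ofReal)
    ((lintegral_tsum_stoppedJumpSq_le hφ hlam).trans_lt ENNReal.ofReal_lt_top).ne
  filter_upwards [hfinite] with x hx hxI hb
  have hterm : ∀ n, ENNReal.ofReal (dyadicStep n (stoppedJumpSq φ lam n) x)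
      = ENNReal.ofReal (dyadicJump φ n (dyadicIndex n x) ^ 2) := fun n => by
    rw [dyadicStep_of_mem hxI, stoppedJumpSq, if_pos (hb n)]
  simp_rw [hterm] at hx
  exact (ENNReal.summable_toReal hx.ne).congr fun n => ENNReal.toReal_ofReal (sq_nonneg _)

/-- The averages converge a.e., so a.e. they stay below some integer `j`, and then
`ae_summable_of_ancestorsBounded` applies with `lam = j`. -/
lemma ae_summable_sq_dyadicJump (hφ : LocallyIntegrable φ) :
    ∀ᵐ x, x ∈ Ico (0 : ℝ) 1 → Summable fun n => dyadicJump φ n (dyadicIndex n x) ^ 2 := by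
  have hstopped := ae_all_iff.2 fun j : ℕ =>
    ae_summable_of_ancestorsBounded (lam := j) hφ (Nat.cast_nonneg j)
  filter_upwards [ae_tendsto_dyadicAvg hφ, hstopped] with x hconv hstop hxI
  obtain ⟨M, hM⟩ := (hconv hxI.1).abs.bddAbove_range
  have hM' : ∀ n, |dyadicAvg φ n (dyadicIndex n x)| ≤ M := fun n => hM (mem_range_self n)
  obtain ⟨j, hj⟩ := exists_nat_ge (2 * M)
  have hM0 : 0 ≤ M := (abs_nonneg _).trans (hM' 0)
  refine hstop j hxI (ancestorsBounded_dyadicIndex fun m => ⟨by linarith [hM' m], ?_⟩)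
  have hjump := abs_dyadicAvg_succ_sub hφ m (dyadicIndex (m + 1) x)
  rw [dyadicIndex_succ_div_two m x] at hjump
  rw [← hjump]
  linarith [abs_sub (dyadicAvg φ (m + 1) (dyadicIndex (m + 1) x))
    (dyadicAvg φ m (dyadicIndex m x)), hM' m, hM' (m + 1)]

end Stopping

section SquareIntegrability

variable {φ : ℝ → ℝ}

lemma sum_levelMean_sq_dyadicJump_le {C : ℝ}
    (hC : ∀ᵐ x, x ∈ Ico (0 : ℝ) 1 →
      ∀ N, ∑ n ∈ Finset.range N, dyadicJump φ n (dyadicIndex n x) ^ 2 ≤ C) (N : ℕ) :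
    ∑ n ∈ Finset.range N, levelMean n (fun k => dyadicJump φ n k ^ 2) ≤ C := by
  have hsupp : ∀ x ∉ Ico (0 : ℝ) 1,
      ∑ n ∈ Finset.range N, dyadicStep n (fun k => dyadicJump φ n k ^ 2) x = 0 :=
    fun x hx => Finset.sum_eq_zero fun n _ => dyadicStep_of_notMem hx
  calc ∑ n ∈ Finset.range N, levelMean n (fun k => dyadicJump φ n k ^ 2)
      = ∫ x in Ico (0 : ℝ) 1, ∑ n ∈ Finset.range N,
          dyadicStep n (fun k => dyadicJump φ n k ^ 2) x := by
        rw [setIntegral_eq_integral_of_forall_compl_eq_zero hsupp,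
          integral_finsetSum _ fun n _ => integrable_dyadicStep]
        simp only [integral_dyadicStep]
    _ ≤ ∫ _ in Ico (0 : ℝ) 1, C := by
        refine integral_mono_ae
          (integrable_finsetSum _ fun n _ => integrable_dyadicStep.restrict)
          (integrableOn_const (by simp)) ?_
        filter_upwards [ae_restrict_of_ae hC, ae_restrict_mem measurableSet_Ico] with x hx hxI
        simpa only [dyadicStep_of_mem hxI] using hx hxI N
    _ = C := by simp

lemma lintegral_sq_le_liminf_levelMean (hφ : LocallyIntegrable φ) :
    ∫⁻ x in Ico (0 : ℝ) 1, ENNReal.ofReal (φ x ^ 2)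
      ≤ liminf (fun N => ENNReal.ofReal (levelMean N fun k => dyadicAvg φ N k ^ 2)) atTop := by
  have hconv : ∀ᵐ x ∂volume.restrict (Ico (0 : ℝ) 1), Tendsto
      (fun N => ENNReal.ofReal (dyadicStep N (fun k => dyadicAvg φ N k ^ 2) x)) atTop
      (𝓝 (ENNReal.ofReal (φ x ^ 2))) := by
    filter_upwards [ae_restrict_of_ae (ae_tendsto_dyadicAvg hφ),
      ae_restrict_mem measurableSet_Ico] with x hx hxI
    simp only [dyadicStep_of_mem hxI]
    exact (ENNReal.continuous_ofReal.tendsto _).comp ((hx hxI.1).pow 2)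
  calc ∫⁻ x in Ico (0 : ℝ) 1, ENNReal.ofReal (φ x ^ 2)
      = ∫⁻ x in Ico (0 : ℝ) 1, liminf
          (fun N => ENNReal.ofReal (dyadicStep N (fun k => dyadicAvg φ N k ^ 2) x)) atTop :=
        lintegral_congr_ae (hconv.mono fun x hx => hx.liminf_eq.symm)
    _ ≤ liminf (fun N => ∫⁻ x in Ico (0 : ℝ) 1,
          ENNReal.ofReal (dyadicStep N (fun k => dyadicAvg φ N k ^ 2) x)) atTop :=
        lintegral_liminf_le fun N => measurable_dyadicStep.ennreal_ofReal
    _ ≤ _ := liminf_le_liminf (Eventually.of_forall fun N =>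
        (setLIntegral_le_lintegral _ _).trans_eq
          (lintegral_ofReal_dyadicStep fun k => sq_nonneg _))

lemma lintegral_sq_le_of_sum_sq_dyadicJump_le (hφ : LocallyIntegrable φ) {C : ℝ}
    (hC : ∀ᵐ x, x ∈ Ico (0 : ℝ) 1 →
      ∀ N, ∑ n ∈ Finset.range N, dyadicJump φ n (dyadicIndex n x) ^ 2 ≤ C) :
    ∫⁻ x in Ico (0 : ℝ) 1, ENNReal.ofReal (φ x ^ 2)
      ≤ ENNReal.ofReal (dyadicAvg φ 0 0 ^ 2 + C) := by
  refine (lintegral_sq_le_liminf_levelMean hφ).trans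
    (liminf_le_of_frequently_le' (Frequently.of_forall fun N => ?_))
  rw [levelMean_sq_dyadicAvg hφ]
  exact ENNReal.ofReal_le_ofReal (by linarith [sum_levelMean_sq_dyadicJump_le hC N])

end SquareIntegrability

lemma haar_eq_indicator_sub (n k : ℕ) :
    haar n k
      = (dyadicIco (n + 1) (2 * k + 1)).indicator 1 - (dyadicIco (n + 1) (2 * k)).indicator 1 := by
  have hdisj := disjoint_left.1
    (disjoint_dyadicIco (n := n + 1) (k := 2 * k) (l := 2 * k + 1) (by omega))
  ext x
  rw [haar, Pi.sub_apply]
  rw [dyadicIco_succ_two_mul, dyadicIco_succ_two_mul_add_one] at hdisj ⊢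
  by_cases hl : x ∈ Ico ((k : ℝ) / 2 ^ n) ((2 * k + 1) / 2 ^ (n + 1))
  · simp [hl, hdisj hl]
  · by_cases hr : x ∈ Ico ((2 * k + 1 : ℝ) / 2 ^ (n + 1)) ((k + 1) / 2 ^ n) <;> simp [hl, hr]

lemma haarCoeff_eq_dyadicJump {f : ℝ → ℝ} (hf : IntegrableOn f (Icc 0 1)) (n k : ℕ) :
    haarCoeff f n k = dyadicJump ((Icc 0 1).indicator f) n k := by
  set φ := (Icc (0 : ℝ) 1).indicator f
  have hφ : Integrable φ := (integrable_indicator_iff measurableSet_Icc).2 hf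
  have hmul : ∀ x, (Icc 0 1).indicator (fun y => f y * haar n k y) x
      = (dyadicIco (n + 1) (2 * k + 1)).indicator φ x
        - (dyadicIco (n + 1) (2 * k)).indicator φ x := by
    intro x
    by_cases hx : x ∈ Icc (0 : ℝ) 1 <;> by_cases hr : x ∈ dyadicIco (n + 1) (2 * k + 1) <;>
      by_cases hl : x ∈ dyadicIco (n + 1) (2 * k) <;> simp [φ, hx, hr, hl, haar_eq_indicator_sub]
  rw [haarCoeff, ← integral_indicator measurableSet_Icc, integral_congr_ae (ae_of_all _ hmul),
    integral_sub (hφ.indicator (measurableSet_dyadicIco _ _))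
      (hφ.indicator (measurableSet_dyadicIco _ _)),
    integral_indicator (measurableSet_dyadicIco _ _),
    integral_indicator (measurableSet_dyadicIco _ _), dyadicJump, dyadicAvg, dyadicAvg, pow_succ]
  ring

lemma ae_forall_ne_dyadic : ∀ᵐ x : ℝ, ∀ n k : ℕ, x ≠ k / 2 ^ n := by
  filter_upwards [(countable_range fun p : ℕ × ℕ => (p.2 : ℝ) / 2 ^ p.1).ae_notMem volume]
    with x hx n k hxk
  exact hx ⟨(n, k), hxk.symm⟩

/-- At a non-dyadic point only the intervals `dyadicIco n (dyadicIndex n x)` contribute to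
`Sf x`. -/
lemma sqFn_sq_eq_tsum (f : ℝ → ℝ) {x : ℝ} (hx : x ∈ Ico (0 : ℝ) 1)
    (hdy : ∀ n k : ℕ, x ≠ k / 2 ^ n) :
    sqFn f x ^ 2 = ∑' n, haarCoeff f n (dyadicIndex n x) ^ 2 := by
  have hmem : ∀ n k, x ∈ dyadicI n k → k = dyadicIndex n x := fun n k hk => by
    have hr : x < (k + 1 : ℝ) / 2 ^ n := hk.2.lt_of_ne (by exact_mod_cast hdy n (k + 1))
    exact (mem_dyadicIco_iff.1 ⟨hk.1, hr⟩).2.symm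
  set F : ℕ × ℕ → ℝ := fun p => haarCoeff f p.1 p.2 ^ 2 * (dyadicI p.1 p.2).indicator 1 x
  have hsupp : Function.support F ⊆ range fun n => (n, dyadicIndex n x) := by
    rintro ⟨n, k⟩ hp
    by_cases hk : x ∈ dyadicI n k
    · exact ⟨n, by rw [hmem n k hk]⟩
    · simp [F, hk] at hp
  have hdiag : ∀ n, F (n, dyadicIndex n x) = haarCoeff f n (dyadicIndex n x) ^ 2 := fun n => by
    have hx' : x ∈ dyadicI n (dyadicIndex n x) :=
      Ico_subset_Icc_self (mem_dyadicIco_dyadicIndex hx.1 n)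
    simp only [F, indicator_of_mem hx', Pi.one_apply, mul_one]
  rw [sqFn, Real.sq_sqrt (tsum_nonneg fun p => mul_nonneg (sq_nonneg _)
    (indicator_nonneg (fun _ _ => zero_le_one) x) : 0 ≤ ∑' p, F p)]
  rw [← Function.Injective.tsum_eq (g := fun n => (n, dyadicIndex n x))
    (fun a b h => congrArg Prod.fst h) hsupp]
  exact tsum_congr hdiag

lemma dyadicAvg_indicator_Icc {f : ℝ → ℝ} {n k : ℕ} (hk : k < 2 ^ n) :
    dyadicAvg ((Icc 0 1).indicator f) n k = dyadicAvg f n k := by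
  rw [dyadicAvg, dyadicAvg, setIntegral_congr_fun (measurableSet_dyadicIco n k)
    fun x hx => indicator_of_mem (Ico_subset_Icc_self (dyadicIco_subset_Ico hk hx)) f]

lemma dyadicJump_indicator_Icc {f : ℝ → ℝ} {n k : ℕ} (hk : k < 2 ^ n) :
    dyadicJump ((Icc 0 1).indicator f) n k = dyadicJump f n k := by
  rw [dyadicJump, dyadicJump, dyadicAvg_indicator_Icc (by rw [pow_succ]; omega),
    dyadicAvg_indicator_Icc (by rw [pow_succ]; omega)]

section UpperBound

variable {f : ℝ → ℝ}

lemma ae_sum_sq_dyadicJump_le_one (hf : Admissible f) :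
    ∀ᵐ x, x ∈ Ico (0 : ℝ) 1 → ∀ N, ∑ n ∈ Finset.range N,
      dyadicJump ((Icc 0 1).indicator f) n (dyadicIndex n x) ^ 2 ≤ 1 := by
  obtain ⟨hint, -, hsq⟩ := hf
  have hφ : LocallyIntegrable ((Icc (0 : ℝ) 1).indicator f) :=
    ((integrable_indicator_iff measurableSet_Icc).2 hint).locallyIntegrable
  filter_upwards [ae_summable_sq_dyadicJump hφ, (ae_restrict_iff' measurableSet_Icc).1 hsq,
    ae_forall_ne_dyadic] with x hsum hsqx hdy hxI N
  simp only [← haarCoeff_eq_dyadicJump hint] at hsum ⊢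
  calc ∑ n ∈ Finset.range N, haarCoeff f n (dyadicIndex n x) ^ 2
      ≤ ∑' n, haarCoeff f n (dyadicIndex n x) ^ 2 :=
        (hsum hxI).sum_le_tsum _ fun n _ => sq_nonneg _
    _ = sqFn f x ^ 2 := (sqFn_sq_eq_tsum f hxI hdy).symm
    _ ≤ 1 := pow_le_one₀ (Real.sqrt_nonneg _) (hsqx (Ico_subset_Icc_self hxI))

lemma lintegral_sq_le_one_of_admissible (hf : Admissible f) :
    ∫⁻ x in Icc (0 : ℝ) 1, ENNReal.ofReal (f x ^ 2) ≤ 1 := by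
  have hφ : LocallyIntegrable ((Icc (0 : ℝ) 1).indicator f) :=
    ((integrable_indicator_iff measurableSet_Icc).2 hf.1).locallyIntegrable
  have hmean : dyadicAvg ((Icc 0 1).indicator f) 0 0 = 0 := by
    rw [dyadicAvg_indicator_Icc (by norm_num), dyadicAvg, pow_zero, one_mul,
      show dyadicIco 0 0 = Ico 0 1 by simp [dyadicIco], ← integral_Icc_eq_integral_Ico, hf.2.1]
  have hbound := lintegral_sq_le_of_sum_sq_dyadicJump_le hφ (ae_sum_sq_dyadicJump_le_one hf)
  rw [hmean] at hbound
  rw [Measure.restrict_congr_set Ico_ae_eq_Icc.symm]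
  calc ∫⁻ x in Ico (0 : ℝ) 1, ENNReal.ofReal (f x ^ 2)
      = ∫⁻ x in Ico (0 : ℝ) 1, ENNReal.ofReal ((Icc 0 1).indicator f x ^ 2) :=
        setLIntegral_congr_fun measurableSet_Ico fun x hx => by
          rw [indicator_of_mem (Ico_subset_Icc_self hx)]
    _ ≤ 1 := by simpa using hbound

instance : IsProbabilityMeasure (volume.restrict (Icc (0 : ℝ) 1)) := ⟨by simp⟩

lemma measureReal_le_half_of_admissible (hf : Admissible f) :
    volume.real {y ∈ Icc (0 : ℝ) 1 | 1 ≤ f y} ≤ 1 / 2 := by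
  have hL2 := lintegral_sq_le_one_of_admissible hf
  have hsq : Integrable (fun x => f x ^ 2) (volume.restrict (Icc 0 1)) :=
    ⟨hf.1.aestronglyMeasurable.pow 2, (hasFiniteIntegral_iff_ofReal
      (ae_of_all _ fun x => sq_nonneg (f x))).2 (hL2.trans_lt ENNReal.one_lt_top)⟩
  have hm : ∫ x in Icc (0 : ℝ) 1, f x ^ 2 ≤ 1 := by
    rw [integral_eq_lintegral_of_nonneg_ae (ae_of_all _ fun x => sq_nonneg (f x))
      hsq.aestronglyMeasurable]
    exact ENNReal.toReal_le_of_le_ofReal zero_le_one (by simpa using hL2)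
  have hm0 : 0 ≤ ∫ x in Icc (0 : ℝ) 1, f x ^ 2 := integral_nonneg fun x => sq_nonneg _
  have hcantelli := meas_ge_le_cantelli
    ((memLp_two_iff_integrable_sq hf.1.aestronglyMeasurable).2 hsq) hf.2.1 one_pos
  rw [measureReal_restrict_apply' measurableSet_Icc] at hcantelli
  calc volume.real {y ∈ Icc (0 : ℝ) 1 | 1 ≤ f y}
        = volume.real ({y | 1 ≤ f y} ∩ Icc 0 1) := by
          congr 1; ext y; simp [and_comm]
    _ ≤ _ := hcantelli
    _ ≤ 1 / 2 := by rw [div_le_div_iff₀ (by positivity) two_pos]; linarith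

end UpperBound

section LowerBound

lemma integrable_haar (n k : ℕ) : Integrable (haar n k) := by
  rw [haar_eq_indicator_sub]
  exact ((integrable_indicator_iff (measurableSet_dyadicIco _ _)).2
    (integrableOn_const (volume_dyadicIco_ne_top _ _))).sub
    ((integrable_indicator_iff (measurableSet_dyadicIco _ _)).2
      (integrableOn_const (volume_dyadicIco_ne_top _ _)))

lemma haar_zero_zero_of_mem {x : ℝ} (hx : x ∈ Ico (0 : ℝ) 1) :
    haar 0 0 x = if dyadicIndex 1 x = 1 then 1 else -1 := by
  have hmem := mem_dyadicIco_dyadicIndex hx.1 1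
  have hlt := dyadicIndex_lt hx 1
  rw [haar_eq_indicator_sub, Pi.sub_apply]
  obtain h | h : dyadicIndex 1 x = 0 ∨ dyadicIndex 1 x = 1 := by omega
  · rw [h] at hmem
    simp [h, hmem, disjoint_left.1 (disjoint_dyadicIco (n := 1) zero_ne_one) hmem]
  · rw [h] at hmem
    simp [h, hmem, disjoint_left.1 (disjoint_dyadicIco (n := 1) one_ne_zero) hmem]

lemma dyadicAvg_haar_zero_zero {m j : ℕ} (hj : j < 2 ^ (m + 1)) :
    dyadicAvg (haar 0 0) (m + 1) j = if j / 2 ^ m = 1 then 1 else -1 := by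
  refine dyadicAvg_eq_of_eqOn fun x hx => ?_
  rw [haar_zero_zero_of_mem (dyadicIco_subset_Ico hj hx), ← dyadicIndex_add_div_pow 1 m x,
    add_comm, (mem_dyadicIco_iff.1 hx).2]

lemma haarCoeff_haar_zero_zero {n k : ℕ} (hk : k < 2 ^ n) :
    haarCoeff (haar 0 0) n k = if n = 0 then 1 else 0 := by
  rw [haarCoeff_eq_dyadicJump (integrable_haar 0 0).integrableOn, dyadicJump_indicator_Icc hk,
    dyadicJump, dyadicAvg_haar_zero_zero (by rw [pow_succ]; omega),
    dyadicAvg_haar_zero_zero (by rw [pow_succ]; omega)]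
  cases n with
  | zero =>
    obtain rfl : k = 0 := by simpa using hk
    norm_num
  | succ m =>
    have h1 : (2 * k + 1) / 2 ^ (m + 1) = k / 2 ^ m := by
      rw [pow_succ', ← Nat.div_div_eq_div_mul, show (2 * k + 1) / 2 = k by omega]
    have h0 : 2 * k / 2 ^ (m + 1) = k / 2 ^ m := by
      rw [pow_succ', ← Nat.div_div_eq_div_mul, show 2 * k / 2 = k by omega]
    simp [h0, h1]

lemma admissible_haar_zero_zero : Admissible (haar 0 0) := by
  refine ⟨(integrable_haar 0 0).integrableOn, ?_, ?_⟩
  · have hφ := (integrable_haar 0 0).locallyIntegrable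
    have h := dyadicAvg_eq_add_div_two hφ 0 0
    rw [dyadicAvg_haar_zero_zero (by norm_num), dyadicAvg_haar_zero_zero (by norm_num), dyadicAvg,
      show dyadicIco 0 0 = Ico 0 1 by simp [dyadicIco]] at h
    rw [integral_Icc_eq_integral_Ico]
    norm_num at h
    exact h
  · refine (ae_restrict_iff' measurableSet_Icc).2 ?_
    filter_upwards [ae_forall_ne_dyadic] with x hdy hx
    have hx' : x ∈ Ico (0 : ℝ) 1 := ⟨hx.1, hx.2.lt_of_ne (by simpa using hdy 0 1)⟩
    have hsq : sqFn (haar 0 0) x ^ 2 = 1 := by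
      rw [sqFn_sq_eq_tsum _ hx' hdy, tsum_eq_single 0 fun n hn => by
        rw [haarCoeff_haar_zero_zero (dyadicIndex_lt hx' n), if_neg hn, zero_pow two_ne_zero],
        haarCoeff_haar_zero_zero (dyadicIndex_lt hx' 0), if_pos rfl, one_pow]
    have hnonneg : 0 ≤ sqFn (haar 0 0) x := Real.sqrt_nonneg _
    nlinarith

lemma setOf_one_le_haar_zero_zero :
    {y ∈ Icc (0 : ℝ) 1 | 1 ≤ haar 0 0 y} = dyadicIco 1 1 := by
  ext y
  have hsub := dyadicIco_subset_Ico (n := 1) (k := 1) (by norm_num)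
  constructor
  · rintro ⟨hy, hy1⟩
    by_contra hy'
    rw [haar_eq_indicator_sub, Pi.sub_apply, indicator_of_notMem hy'] at hy1
    linarith [indicator_nonneg (fun _ _ => zero_le_one) y (s := dyadicIco 1 0)
      (f := (1 : ℝ → ℝ))]
  · intro hy
    refine ⟨Ico_subset_Icc_self (hsub hy), ?_⟩
    rw [haar_zero_zero_of_mem (hsub hy), if_pos (mem_dyadicIco_iff.1 hy).2]

end LowerBound

end DyadicBellman

open DyadicBellman in
theorem bellman_one : bellman 1 = 1 / 2 := by
  refine IsGreatest.csSup_eq ⟨⟨haar 0 0, admissible_haar_zero_zero, ?_⟩, ?_⟩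
  · rw [← measureReal_def, setOf_one_le_haar_zero_zero, volume_real_dyadicIco]
    norm_num
  · rintro m ⟨f, hf, rfl⟩
    exact measureReal_le_half_of_admissible hf
end
end

section
/- For every x ≥ 0, 𝓑(x) ≤ 1/(1+x²). -/
open MeasureTheory

noncomputable section

/-!
Let `F` be `f` extended by zero and `Fₙ(x)` the average of `F` over the dyadic interval of
generation `n` containing `x`. On each dyadic `J` the martingale moves by `Fₙ₊₁ - Fₙ = ±a_J`, so
`∫ Fₙ² = (∫ f)² + Σ_{|J| > 2⁻ⁿ} a_J² |J| = ∫ Σ_{|J| > 2⁻ⁿ} a_J² χ_J ≤ ∫ (Sf)² ≤ 1`. By the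
Lebesgue differentiation theorem `Fₙ → f` a.e., so Fatou's lemma gives `∫ f² ≤ 1`, and
Cantelli's inequality for the mean-zero `f` yields `μ{f ≥ x} ≤ ∫ f² / (∫ f² + x²) ≤ 1/(1 + x²)`.

The estimate `Σ_{|J| > 2⁻ⁿ} a_J² χ_J ≤ (Sf)²` needs the series defining `sqFn` to converge a.e.
(otherwise `tsum` returns `0`). This is the a.e. finiteness of the square function of the
`L¹` martingale `Fₙ`: stopped when the average of `|F|` first exceeds `c`, the martingale stays
bounded by `2c`, so its square function is integrable; and almost every point is never stopped
once `c` is large, since its averages of `|F|` converge.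
-/

open Set Filter Topology

section ProbabilityFacts

variable {Ω : Type*} [MeasurableSpace Ω] {μ : Measure Ω}

lemma integrable_sq_and_integral_sq_le_of_ae_tendsto {g : ℕ → Ω → ℝ} {f : Ω → ℝ} {C : ℝ}
    (hg : ∀ n, Integrable (fun ω => g n ω ^ 2) μ) (hC : ∀ n, ∫ ω, g n ω ^ 2 ∂μ ≤ C)
    (hf : AEStronglyMeasurable f μ)
    (hlim : ∀ᵐ ω ∂μ, Tendsto (fun n => g n ω) atTop (𝓝 (f ω))) :
    Integrable (fun ω => f ω ^ 2) μ ∧ ∫ ω, f ω ^ 2 ∂μ ≤ C := by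
  have hC0 : 0 ≤ C := (integral_nonneg fun _ => sq_nonneg _).trans (hC 0)
  have hfatou : ∫⁻ ω, ENNReal.ofReal (f ω ^ 2) ∂μ ≤ ENNReal.ofReal C :=
    calc ∫⁻ ω, ENNReal.ofReal (f ω ^ 2) ∂μ
        = ∫⁻ ω, liminf (fun n => ENNReal.ofReal (g n ω ^ 2)) atTop ∂μ := by
          refine lintegral_congr_ae (hlim.mono fun ω hω => ?_)
          exact (((ENNReal.continuous_ofReal.tendsto _).comp (hω.pow 2)).liminf_eq).symm
      _ ≤ liminf (fun n => ∫⁻ ω, ENNReal.ofReal (g n ω ^ 2) ∂μ) atTop :=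
          lintegral_liminf_le' fun n => (hg n).aemeasurable.ennreal_ofReal
      _ ≤ ENNReal.ofReal C := by
          refine liminf_le_of_frequently_le' (Frequently.of_forall fun n => ?_)
          rw [← ofReal_integral_eq_lintegral_ofReal (hg n) (ae_of_all _ fun _ => sq_nonneg _)]
          exact ENNReal.ofReal_le_ofReal (hC n)
  have hint : Integrable (fun ω => f ω ^ 2) μ :=
    ⟨hf.pow 2, (hasFiniteIntegral_iff_ofReal (ae_of_all _ fun _ => sq_nonneg _)).2
      (hfatou.trans_lt ENNReal.ofReal_lt_top)⟩
  refine ⟨hint, (ENNReal.ofReal_le_ofReal_iff hC0).1 ?_⟩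
  rwa [ofReal_integral_eq_lintegral_ofReal hint (ae_of_all _ fun _ => sq_nonneg _)]

lemma ae_summable_of_sum_integral_le {φ : ℕ → Ω → ℝ} {C : ℝ}
    (hφ : ∀ m, Integrable (φ m) μ) (hφ_nonneg : ∀ m, 0 ≤ᵐ[μ] φ m)
    (hC : ∀ n, ∑ m ∈ Finset.range n, ∫ ω, φ m ω ∂μ ≤ C) :
    ∀ᵐ ω ∂μ, Summable fun m => φ m ω := by
  have hmeas : ∀ m, AEMeasurable (fun ω => ENNReal.ofReal (φ m ω)) μ :=
    fun m => (hφ m).aemeasurable.ennreal_ofReal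
  have hlint : ∫⁻ ω, ∑' m, ENNReal.ofReal (φ m ω) ∂μ ≠ ⊤ := by
    rw [lintegral_tsum hmeas]
    refine ne_top_of_le_ne_top (ENNReal.ofReal_ne_top (r := C))
      (ENNReal.tsum_le_of_sum_range_le fun n => ?_)
    simp_rw [← ofReal_integral_eq_lintegral_ofReal (hφ _) (hφ_nonneg _)]
    rw [← ENNReal.ofReal_sum_of_nonneg fun m _ => integral_nonneg_of_ae (hφ_nonneg m)]
    exact ENNReal.ofReal_le_ofReal (hC n)
  filter_upwards [ae_lt_top' (AEMeasurable.tsum hmeas) hlint, ae_all_iff.2 hφ_nonneg]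
    with ω hω hω_nonneg
  simpa only [ENNReal.toReal_ofReal (hω_nonneg _)] using ENNReal.summable_toReal hω.ne

variable [IsProbabilityMeasure μ]

lemma measureReal_ge_le_integral_sq_div_add_sq {f : Ω → ℝ} (hf : MemLp f 2 μ)
    (hmean : ∫ ω, f ω ∂μ = 0) {x : ℝ} (hx : 0 < x) :
    μ.real {ω | x ≤ f ω} ≤ (∫ ω, f ω ^ 2 ∂μ) / (∫ ω, f ω ^ 2 ∂μ + x ^ 2) := by
  set v := ∫ ω, f ω ^ 2 ∂μ
  have hv : 0 ≤ v := integral_nonneg fun _ => sq_nonneg _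
  -- Markov's inequality for `(f + c) ^ 2`, with the optimal shift `c = v / x`
  set c := v / x
  have hc : 0 ≤ c := by positivity
  have hf1 : Integrable f μ := hf.integrable one_le_two
  have hshift : ∫ ω, (f ω + c) ^ 2 ∂μ = v + c ^ 2 := by
    have hexpand : ∀ ω, (f ω + c) ^ 2 = f ω ^ 2 + 2 * c * f ω + c ^ 2 := fun ω => by ring
    simp_rw [hexpand]
    have hint : Integrable (fun ω => f ω ^ 2 + 2 * c * f ω) μ :=
      hf.integrable_sq.add (hf1.const_mul _)
    rw [integral_add hint (integrable_const _), integral_add hf.integrable_sq (hf1.const_mul _),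
      integral_const_mul, hmean]
    simp [v]
  have hsub : {ω | x ≤ f ω} ⊆ {ω | (x + c) ^ 2 ≤ (f ω + c) ^ 2} :=
    fun ω (hω : x ≤ f ω) => pow_le_pow_left₀ (by positivity : 0 ≤ x + c) (by linarith) 2
  have hmarkov : (x + c) ^ 2 * μ.real {ω | x ≤ f ω} ≤ v + c ^ 2 := by
    refine (mul_le_mul_of_nonneg_left (measureReal_mono hsub) (sq_nonneg _)).trans ?_
    rw [← hshift]
    exact mul_meas_ge_le_integral_of_nonneg (ae_of_all _ fun _ => sq_nonneg _)
      ((hf.add (memLp_const c)).integrable_sq) _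
  have e1 : (x + c) ^ 2 = (v + x ^ 2) / x ^ 2 * (v + x ^ 2) := by simp only [c]; field_simp; ring
  have e2 : v + c ^ 2 = (v + x ^ 2) / x ^ 2 * v := by simp only [c]; field_simp; ring
  rw [e1, e2, mul_assoc] at hmarkov
  rw [le_div_iff₀ (by positivity), mul_comm]
  exact le_of_mul_le_mul_left hmarkov (by positivity)

lemma measureReal_ge_le_inv_one_add_sq {f : Ω → ℝ} (hf : MemLp f 2 μ)
    (hmean : ∫ ω, f ω ∂μ = 0) (hsq : ∫ ω, f ω ^ 2 ∂μ ≤ 1) {x : ℝ} (hx : 0 ≤ x) :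
    μ.real {ω | x ≤ f ω} ≤ 1 / (1 + x ^ 2) := by
  rcases hx.eq_or_lt with rfl | hx
  · simp
  refine (measureReal_ge_le_integral_sq_div_add_sq hf hmean hx).trans ?_
  have hv : 0 ≤ ∫ ω, f ω ^ 2 ∂μ := integral_nonneg fun _ => sq_nonneg _
  rw [div_le_div_iff₀ (by positivity) (by positivity)]
  nlinarith

end ProbabilityFacts

namespace DyadicHaar

def dyadicIco (n k : ℕ) : Set ℝ := Ico ((k : ℝ) / 2 ^ n) (((k : ℝ) + 1) / 2 ^ n)

def dyadicIndex (n : ℕ) (x : ℝ) : ℕ := ⌊2 ^ n * x⌋₊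

def dyadicAvg (g : ℝ → ℝ) (n k : ℕ) : ℝ := 2 ^ n * ∫ t in dyadicIco n k, g t

def dyadicPoints : Set ℝ := range fun p : ℕ × ℕ => (p.2 : ℝ) / 2 ^ p.1

section Intervals

variable {n k : ℕ} {x : ℝ}

lemma dyadicIco_two_mul (n k : ℕ) :
    dyadicIco (n + 1) (2 * k) = Ico ((k : ℝ) / 2 ^ n) ((2 * (k : ℝ) + 1) / 2 ^ (n + 1)) := by
  unfold dyadicIco; congr 1 <;> push_cast <;> ring

lemma dyadicIco_two_mul_add_one (n k : ℕ) :
    dyadicIco (n + 1) (2 * k + 1) =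
      Ico ((2 * (k : ℝ) + 1) / 2 ^ (n + 1)) (((k : ℝ) + 1) / 2 ^ n) := by
  unfold dyadicIco; congr 1 <;> push_cast <;> ring

lemma dyadicIco_eq_union (n k : ℕ) :
    dyadicIco n k = dyadicIco (n + 1) (2 * k) ∪ dyadicIco (n + 1) (2 * k + 1) := by
  have hp : (0 : ℝ) < 2 ^ n := by positivity
  rw [dyadicIco_two_mul, dyadicIco_two_mul_add_one, Ico_union_Ico_eq_Ico]
  · rfl
  · rw [div_le_div_iff₀ hp (by positivity), pow_succ]; nlinarith
  · rw [div_le_div_iff₀ (by positivity) hp, pow_succ]; nlinarith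

lemma dyadicIndex_eq_of_mem (hx : x ∈ dyadicIco n k) : dyadicIndex n x = k := by
  have hp : (0 : ℝ) < 2 ^ n := by positivity
  obtain ⟨h1, h2⟩ := hx
  rw [div_le_iff₀' hp] at h1
  rw [lt_div_iff₀' hp] at h2
  exact (Nat.floor_eq_iff ((Nat.cast_nonneg k).trans h1)).2 ⟨h1, h2⟩

lemma mem_dyadicIco_dyadicIndex (hx : 0 ≤ x) (n : ℕ) : x ∈ dyadicIco n (dyadicIndex n x) := by
  have hp : (0 : ℝ) < 2 ^ n := by positivity
  constructor
  · rw [div_le_iff₀' hp]; exact Nat.floor_le (by positivity)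
  · rw [lt_div_iff₀' hp]; exact Nat.lt_floor_add_one _

lemma dyadicIndex_lt (hx : x ∈ Ico (0 : ℝ) 1) (n : ℕ) : dyadicIndex n x < 2 ^ n := by
  have hp : (0 : ℝ) < 2 ^ n := by positivity
  rw [dyadicIndex, Nat.floor_lt (mul_nonneg hp.le hx.1)]
  push_cast
  nlinarith [hx.2]

lemma dyadicIndex_div_two_pow (x : ℝ) {m j : ℕ} (h : j ≤ m) :
    dyadicIndex m x / 2 ^ (m - j) = dyadicIndex j x := by
  obtain ⟨d, rfl⟩ := Nat.exists_eq_add_of_le h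
  rw [dyadicIndex, dyadicIndex, ← Nat.floor_div_natCast, Nat.add_sub_cancel_left, pow_add]
  push_cast
  field_simp

lemma measurableSet_dyadicIco (n k : ℕ) : MeasurableSet (dyadicIco n k) := measurableSet_Ico

lemma disjoint_dyadicIco {k k' : ℕ} (h : k ≠ k') : Disjoint (dyadicIco n k) (dyadicIco n k') :=
  disjoint_left.2 fun _ hk hk' =>
    h ((dyadicIndex_eq_of_mem hk).symm.trans (dyadicIndex_eq_of_mem hk'))

lemma volume_dyadicIco (n k : ℕ) : volume (dyadicIco n k) = ENNReal.ofReal (1 / 2 ^ n) := by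
  rw [dyadicIco, Real.volume_Ico]; ring_nf

lemma Ico_eq_biUnion_dyadicIco (n : ℕ) :
    Ico (0 : ℝ) 1 = ⋃ k ∈ Finset.range (2 ^ n), dyadicIco n k := by
  ext x
  simp only [mem_iUnion, Finset.mem_range]
  refine ⟨fun hx => ⟨_, dyadicIndex_lt hx n, mem_dyadicIco_dyadicIndex hx.1 n⟩, ?_⟩
  rintro ⟨k, hk, hx1, hx2⟩
  refine ⟨(div_nonneg (Nat.cast_nonneg k) (by positivity)).trans hx1, hx2.trans_le ?_⟩
  rw [div_le_one (by positivity)]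
  exact_mod_cast hk

end Intervals

section StepFunctions

variable (φ : ℕ → ℝ) (n : ℕ)

lemma setIntegral_dyadicIco_comp_dyadicIndex (k : ℕ) :
    ∫ x in dyadicIco n k, φ (dyadicIndex n x) = φ k / 2 ^ n := by
  rw [setIntegral_congr_fun (measurableSet_dyadicIco n k)
      fun x hx => congrArg φ (dyadicIndex_eq_of_mem hx),
    setIntegral_const, measureReal_def, volume_dyadicIco, ENNReal.toReal_ofReal (by positivity),
    smul_eq_mul]
  ring

lemma integrableOn_dyadicIco_comp_dyadicIndex (k : ℕ) :
    IntegrableOn (fun x => φ (dyadicIndex n x)) (dyadicIco n k) :=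
  (integrableOn_const (by rw [volume_dyadicIco]; exact ENNReal.ofReal_ne_top)).congr_fun
    (fun x hx => congrArg φ (dyadicIndex_eq_of_mem hx).symm) (measurableSet_dyadicIco n k)

lemma integrableOn_comp_dyadicIndex :
    IntegrableOn (fun x => φ (dyadicIndex n x)) (Ico 0 1) := by
  rw [Ico_eq_biUnion_dyadicIco n, integrableOn_finset_iUnion]
  exact fun k _ => integrableOn_dyadicIco_comp_dyadicIndex φ n k

lemma integral_comp_dyadicIndex :
    ∫ x in Ico 0 1, φ (dyadicIndex n x) = ∑ k ∈ Finset.range (2 ^ n), φ k / 2 ^ n := by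
  rw [Ico_eq_biUnion_dyadicIco n, integral_biUnion_finset _ (fun k _ => measurableSet_dyadicIco n k)
    (fun _ _ _ _ h => disjoint_dyadicIco h)
    (fun k _ => integrableOn_dyadicIco_comp_dyadicIndex φ n k)]
  exact Finset.sum_congr rfl fun k _ => setIntegral_dyadicIco_comp_dyadicIndex φ n k

end StepFunctions

section Averages

variable {g : ℝ → ℝ}

lemma dyadicAvg_eq_add_div_two (hg : Integrable g) (n k : ℕ) :
    dyadicAvg g n k = (dyadicAvg g (n + 1) (2 * k) + dyadicAvg g (n + 1) (2 * k + 1)) / 2 := by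
  rw [dyadicAvg, dyadicAvg, dyadicAvg, dyadicIco_eq_union n k,
    setIntegral_union (disjoint_dyadicIco (by omega)) (measurableSet_dyadicIco _ _)
      hg.integrableOn hg.integrableOn, pow_succ]
  ring

lemma dyadicAvg_abs_nonneg (n k : ℕ) : 0 ≤ dyadicAvg (fun t => |g t|) n k :=
  mul_nonneg (by positivity)
    (setIntegral_nonneg (measurableSet_dyadicIco n k) fun _ _ => abs_nonneg _)

lemma abs_dyadicAvg_le (n k : ℕ) : |dyadicAvg g n k| ≤ dyadicAvg (fun t => |g t|) n k := by
  rw [dyadicAvg, dyadicAvg, abs_mul, abs_of_pos (by positivity : (0 : ℝ) < 2 ^ n)]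
  gcongr
  exact abs_integral_le_integral_abs

lemma dyadicAvg_abs_le_two_mul_parent (hg : Integrable g) (n j : ℕ) :
    dyadicAvg (fun t => |g t|) (n + 1) j ≤ 2 * dyadicAvg (fun t => |g t|) n (j / 2) := by
  have h := dyadicAvg_eq_add_div_two hg.abs n (j / 2)
  rcases Nat.even_or_odd' j with ⟨i, rfl | rfl⟩
  · rw [show 2 * i / 2 = i by omega] at h ⊢
    linarith [dyadicAvg_abs_nonneg (g := g) (n + 1) (2 * i + 1)]
  · rw [show (2 * i + 1) / 2 = i by omega] at h ⊢
    linarith [dyadicAvg_abs_nonneg (g := g) (n + 1) (2 * i)]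

end Averages

lemma haar_eq_indicator_sub (n k : ℕ) :
    haar n k =
      (dyadicIco (n + 1) (2 * k + 1)).indicator 1 - (dyadicIco (n + 1) (2 * k)).indicator 1 := by
  ext x
  rw [haar, dyadicIco_two_mul, dyadicIco_two_mul_add_one]
  by_cases hl : x ∈ Ico ((k : ℝ) / 2 ^ n) ((2 * (k : ℝ) + 1) / 2 ^ (n + 1))
  · have hr : x ∉ Ico ((2 * (k : ℝ) + 1) / 2 ^ (n + 1)) (((k : ℝ) + 1) / 2 ^ n) :=
      fun hr => hr.1.not_gt hl.2
    simp [hl, hr]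
  · by_cases hr : x ∈ Ico ((2 * (k : ℝ) + 1) / 2 ^ (n + 1)) (((k : ℝ) + 1) / 2 ^ n) <;>
      simp [hl, hr]

lemma haarCoeff_eq_dyadicAvg_sub {f : ℝ → ℝ} (hf : IntegrableOn f (Icc 0 1)) (n k : ℕ) :
    haarCoeff f n k = (dyadicAvg ((Icc 0 1).indicator f) (n + 1) (2 * k + 1) -
      dyadicAvg ((Icc 0 1).indicator f) (n + 1) (2 * k)) / 2 := by
  have hmul : ∀ (s : Set ℝ) x, f x * s.indicator 1 x = s.indicator f x := fun s x => by
    by_cases hx : x ∈ s <;> simp [hx]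
  have hpiece : ∀ j, ∫ x in Icc 0 1, (dyadicIco (n + 1) j).indicator f x =
      ∫ x in dyadicIco (n + 1) j, (Icc 0 1).indicator f x := fun j => by
    rw [setIntegral_indicator (measurableSet_dyadicIco _ _),
      setIntegral_indicator measurableSet_Icc, inter_comm]
  simp_rw [haarCoeff, haar_eq_indicator_sub, Pi.sub_apply, mul_sub, hmul]
  rw [integral_sub (hf.indicator (measurableSet_dyadicIco _ _))
      (hf.indicator (measurableSet_dyadicIco _ _)), hpiece, hpiece, dyadicAvg, dyadicAvg, pow_succ]
  field_simp

lemma sum_range_two_mul (u : ℕ → ℝ) (n : ℕ) :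
    ∑ i ∈ Finset.range (2 * n), u i =
      ∑ i ∈ Finset.range n, (u (2 * i) + u (2 * i + 1)) := by
  induction n with
  | zero => simp
  | succ n ih =>
    rw [show 2 * (n + 1) = 2 * n + 1 + 1 by ring, Finset.sum_range_succ, Finset.sum_range_succ,
      Finset.sum_range_succ, ih]
    ring

lemma sum_sq_dyadicAvg_succ {f : ℝ → ℝ} (hf : IntegrableOn f (Icc 0 1)) (n : ℕ) :
    ∑ k ∈ Finset.range (2 ^ (n + 1)),
        dyadicAvg ((Icc 0 1).indicator f) (n + 1) k ^ 2 / 2 ^ (n + 1) =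
      ∑ k ∈ Finset.range (2 ^ n), dyadicAvg ((Icc 0 1).indicator f) n k ^ 2 / 2 ^ n +
        ∑ k ∈ Finset.range (2 ^ n), haarCoeff f n k ^ 2 / 2 ^ n := by
  rw [pow_succ 2 n, mul_comm _ 2, sum_range_two_mul, ← Finset.sum_add_distrib]
  refine Finset.sum_congr rfl fun k _ => ?_
  rw [dyadicAvg_eq_add_div_two (hf.integrable_indicator measurableSet_Icc) n k,
    haarCoeff_eq_dyadicAvg_sub hf]
  ring

lemma closedBall_eq_dyadicI (n k : ℕ) :
    Metric.closedBall ((k : ℝ) / 2 ^ n + 1 / 2 ^ (n + 1)) (1 / 2 ^ (n + 1)) = dyadicI n k := by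
  rw [Real.closedBall_eq_Icc, dyadicI, pow_succ]
  congr 1 <;> field_simp <;> ring

lemma setAverage_dyadicI (g : ℝ → ℝ) (n k : ℕ) :
    ⨍ y in dyadicI n k, g y = dyadicAvg g n k := by
  rw [setAverage_eq, measureReal_def, dyadicAvg, dyadicI, Real.volume_Icc,
    setIntegral_congr_set Ico_ae_eq_Icc.symm, smul_eq_mul,
    show ((k : ℝ) + 1) / 2 ^ n - k / 2 ^ n = (2 ^ n)⁻¹ by field_simp; ring,
    ENNReal.toReal_ofReal (by positivity), inv_inv]
  rfl

lemma ae_tendsto_dyadicAvg {g : ℝ → ℝ} (hg : LocallyIntegrable g) :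
    ∀ᵐ x, 0 ≤ x →
      Tendsto (fun n => dyadicAvg g n (dyadicIndex n x)) atTop (𝓝 (g x)) := by
  filter_upwards [IsUnifLocDoublingMeasure.ae_tendsto_average volume hg 1] with x hx hx0
  have hδ : Tendsto (fun n : ℕ => (1 : ℝ) / 2 ^ (n + 1)) atTop (𝓝[>] 0) := by
    refine tendsto_nhdsWithin_iff.2
      ⟨?_, Eventually.of_forall fun n => mem_Ioi.2 (by positivity)⟩
    refine ((tendsto_pow_atTop_nhds_zero_of_lt_one (by norm_num : (0 : ℝ) ≤ 1 / 2)
      (by norm_num)).comp (tendsto_add_atTop_nat 1)).congr fun n => ?_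
    simp
  have hmem : ∀ᶠ n in atTop, x ∈ Metric.closedBall
      ((dyadicIndex n x : ℝ) / 2 ^ n + 1 / 2 ^ (n + 1)) (1 * (1 / 2 ^ (n + 1))) :=
    Eventually.of_forall fun n => by
      rw [one_mul, closedBall_eq_dyadicI]
      exact Ico_subset_Icc_self (mem_dyadicIco_dyadicIndex hx0 n)
  simpa only [closedBall_eq_dyadicI, setAverage_dyadicI] using hx _ _ hδ hmem

section Stopping

variable {g : ℝ → ℝ} {c : ℝ} {n k : ℕ}

/-- `k / 2 ^ (n - m)` is the index of the ancestor of generation `m` of `dyadicIco n k`. -/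
def IsStopped (g : ℝ → ℝ) (c : ℝ) (n k : ℕ) : Prop :=
  ∃ m ≤ n, c < dyadicAvg (fun t => |g t|) m (k / 2 ^ (n - m))

open scoped Classical in
/-- The value `0` when stopped at generation `0` keeps `|stoppedAvg g c n k| ≤ 2 * c` without
any assumption on the average of `|g|` over `[0, 1)`. -/
def stoppedAvg (g : ℝ → ℝ) (c : ℝ) : ℕ → ℕ → ℝ
  | 0, k => if IsStopped g c 0 k then 0 else dyadicAvg g 0 k
  | n + 1, k => if IsStopped g c n (k / 2) then stoppedAvg g c n (k / 2) else dyadicAvg g (n + 1) k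

lemma IsStopped.of_parent (h : IsStopped g c n (k / 2)) : IsStopped g c (n + 1) k := by
  obtain ⟨m, hm, h⟩ := h
  refine ⟨m, by omega, ?_⟩
  rwa [Nat.div_div_eq_div_mul, ← pow_succ', show n - m + 1 = n + 1 - m by omega] at h

lemma dyadicAvg_abs_le_of_not_isStopped (h : ¬IsStopped g c n k) :
    dyadicAvg (fun t => |g t|) n k ≤ c :=
  not_lt.1 fun hlt => h ⟨n, le_rfl, by simpa using hlt⟩

lemma stoppedAvg_of_not_isStopped (h : ¬IsStopped g c n k) :
    stoppedAvg g c n k = dyadicAvg g n k := by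
  cases n with
  | zero => simp [stoppedAvg, h]
  | succ n => rw [stoppedAvg, if_neg fun hp => h hp.of_parent]

lemma abs_stoppedAvg_le (hg : Integrable g) (hc : 0 ≤ c) :
    ∀ n k, |stoppedAvg g c n k| ≤ 2 * c
  | 0, k => by
    rw [stoppedAvg]
    split_ifs with h
    · simpa using hc
    · linarith [abs_dyadicAvg_le (g := g) 0 k, dyadicAvg_abs_le_of_not_isStopped h]
  | n + 1, k => by
    rw [stoppedAvg]
    split_ifs with h
    · exact abs_stoppedAvg_le hg hc n (k / 2)
    · linarith [abs_dyadicAvg_le (g := g) (n + 1) k, dyadicAvg_abs_le_two_mul_parent hg n k,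
        dyadicAvg_abs_le_of_not_isStopped h]

open scoped Classical in
lemma sum_sq_stoppedAvg_succ {f : ℝ → ℝ} (hf : IntegrableOn f (Icc 0 1)) (c : ℝ) (n : ℕ) :
    ∑ k ∈ Finset.range (2 ^ (n + 1)),
        stoppedAvg ((Icc 0 1).indicator f) c (n + 1) k ^ 2 / 2 ^ (n + 1) =
      ∑ k ∈ Finset.range (2 ^ n), stoppedAvg ((Icc 0 1).indicator f) c n k ^ 2 / 2 ^ n +
        ∑ k ∈ Finset.range (2 ^ n),
          (if IsStopped ((Icc 0 1).indicator f) c n k then 0 else haarCoeff f n k ^ 2) / 2 ^ n := by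
  rw [pow_succ 2 n, mul_comm _ 2, sum_range_two_mul, ← Finset.sum_add_distrib]
  refine Finset.sum_congr rfl fun k _ => ?_
  simp only [stoppedAvg, show 2 * k / 2 = k by omega, show (2 * k + 1) / 2 = k by omega]
  split_ifs with h
  · ring
  · rw [stoppedAvg_of_not_isStopped h,
      dyadicAvg_eq_add_div_two (hf.integrable_indicator measurableSet_Icc) n k,
      haarCoeff_eq_dyadicAvg_sub hf]
    ring

open scoped Classical in
lemma sum_sq_haarCoeff_not_isStopped_le {f : ℝ → ℝ} (hf : IntegrableOn f (Icc 0 1))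
    (hc : 0 ≤ c) (n : ℕ) :
    ∑ m ∈ Finset.range n, ∑ k ∈ Finset.range (2 ^ m),
      (if IsStopped ((Icc 0 1).indicator f) c m k then 0 else haarCoeff f m k ^ 2) / 2 ^ m ≤
        4 * c ^ 2 := by
  set Q : ℕ → ℝ := fun m =>
    ∑ k ∈ Finset.range (2 ^ m), stoppedAvg ((Icc 0 1).indicator f) c m k ^ 2 / 2 ^ m
  have hQ : ∀ m, Q m ≤ 4 * c ^ 2 := fun m => by
    calc Q m ≤ ∑ k ∈ Finset.range (2 ^ m), (2 * c) ^ 2 / 2 ^ m := by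
          refine Finset.sum_le_sum fun k _ =>
            div_le_div_of_nonneg_right (sq_le_sq.2 ?_) (by positivity)
          exact (abs_stoppedAvg_le (hf.integrable_indicator measurableSet_Icc) hc m k).trans
            (le_abs_self _)
      _ = 4 * c ^ 2 := by
          rw [Finset.sum_const, Finset.card_range, nsmul_eq_mul]
          push_cast
          field_simp
          ring
  have hstep : ∀ m, Q (m + 1) - Q m = ∑ k ∈ Finset.range (2 ^ m),
      (if IsStopped ((Icc 0 1).indicator f) c m k then 0 else haarCoeff f m k ^ 2) / 2 ^ m :=
    fun m => by simp only [Q]; rw [sum_sq_stoppedAvg_succ hf]; ring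
  rw [← Finset.sum_congr rfl fun m _ => hstep m, Finset.sum_range_sub]
  linarith [hQ n, show 0 ≤ Q 0 from Finset.sum_nonneg fun _ _ => by positivity]

end Stopping

lemma ae_summable_sq_haarCoeff {f : ℝ → ℝ} (hf : IntegrableOn f (Icc 0 1)) :
    ∀ᵐ x ∂volume.restrict (Ico 0 1),
      Summable fun m => haarCoeff f m (dyadicIndex m x) ^ 2 := by
  classical
  set F := (Icc (0 : ℝ) 1).indicator f
  have hF : Integrable F := hf.integrable_indicator measurableSet_Icc
  set φ : ℕ → ℕ → ℕ → ℝ := fun N m k =>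
    if IsStopped F N m k then 0 else haarCoeff f m k ^ 2
  have hstopped : ∀ N, ∀ᵐ x ∂volume.restrict (Ico 0 1),
      Summable fun m => φ N m (dyadicIndex m x) :=
    fun N => ae_summable_of_sum_integral_le (fun m => integrableOn_comp_dyadicIndex (φ N m) m)
      (fun m => ae_of_all _ fun x => by simp only [φ]; split_ifs <;> positivity)
      (fun n => by
        simp_rw [integral_comp_dyadicIndex]
        exact sum_sq_haarCoeff_not_isStopped_le hf (Nat.cast_nonneg N) n)
  have hconv : ∀ᵐ x ∂volume.restrict (Ico 0 1),
      Tendsto (fun n => dyadicAvg (fun t => |F t|) n (dyadicIndex n x)) atTop (𝓝 |F x|) := by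
    filter_upwards [ae_restrict_of_ae (ae_tendsto_dyadicAvg hF.abs.locallyIntegrable),
      ae_restrict_mem measurableSet_Ico] with x hx hx01 using hx hx01.1
  filter_upwards [ae_all_iff.2 hstopped, hconv] with x hsum hx
  obtain ⟨B, hB⟩ := hx.bddAbove_range
  obtain ⟨N, hN⟩ := exists_nat_ge B
  have hnot : ∀ m, ¬IsStopped F N m (dyadicIndex m x) := by
    rintro m ⟨j, hj, hlt⟩
    rw [dyadicIndex_div_two_pow x hj] at hlt
    exact (hlt.trans_le ((hB (mem_range_self j)).trans hN)).false
  simpa [φ, hnot] using hsum N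

section SquareFunction

variable {f : ℝ → ℝ} {x : ℝ}

lemma indicator_dyadicI_eq_ite (hx : 0 ≤ x) (hxd : x ∉ dyadicPoints) (m k : ℕ) :
    (dyadicI m k).indicator (1 : ℝ → ℝ) x = if k = dyadicIndex m x then 1 else 0 := by
  split_ifs with hk
  · subst hk
    exact indicator_of_mem (Ico_subset_Icc_self (mem_dyadicIco_dyadicIndex hx m)) _
  · refine indicator_of_notMem (fun hmem => hk ?_) _
    have hright : ((k : ℝ) + 1) / 2 ^ m ≠ x := fun h =>
      hxd ⟨(m, k + 1), by push_cast; exact h⟩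
    exact (dyadicIndex_eq_of_mem ⟨hmem.1, hmem.2.lt_of_ne hright.symm⟩).symm

lemma sqFn_eq_sqrt_tsum (hx : 0 ≤ x) (hxd : x ∉ dyadicPoints) :
    sqFn f x = √(∑' m, haarCoeff f m (dyadicIndex m x) ^ 2) := by
  have hinj : Function.Injective fun m => (m, dyadicIndex m x) := fun _ _ h => congrArg Prod.fst h
  rw [sqFn, ← hinj.tsum_eq]
  · simp [indicator_dyadicI_eq_ite hx hxd]
  · intro p hp
    rw [Function.mem_support, indicator_dyadicI_eq_ite hx hxd] at hp
    split_ifs at hp with hk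
    · exact ⟨p.1, Prod.ext rfl hk.symm⟩
    · simp at hp

lemma ae_sum_range_sq_haarCoeff_le_one (hf : Admissible f) :
    ∀ᵐ x ∂volume.restrict (Ico 0 1),
      ∀ n, ∑ m ∈ Finset.range n, haarCoeff f m (dyadicIndex m x) ^ 2 ≤ 1 := by
  obtain ⟨hint, -, hsq⟩ := hf
  rw [← Measure.restrict_congr_set Ico_ae_eq_Icc] at hsq
  filter_upwards [ae_summable_sq_haarCoeff hint, hsq,
    ae_restrict_of_ae ((countable_range _).ae_notMem volume : ∀ᵐ x, x ∉ dyadicPoints),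
    ae_restrict_mem measurableSet_Ico] with x hsum hsq hxd hx n
  rw [sqFn_eq_sqrt_tsum hx.1 hxd, Real.sqrt_le_one] at hsq
  exact (hsum.sum_le_tsum _ fun _ _ => sq_nonneg _).trans hsq

end SquareFunction

lemma integral_sq_dyadicAvg_le_one {f : ℝ → ℝ} (hf : Admissible f) (n : ℕ) :
    ∫ x in Ico 0 1, dyadicAvg ((Icc 0 1).indicator f) n (dyadicIndex n x) ^ 2 ≤ 1 := by
  have hmean : dyadicAvg ((Icc 0 1).indicator f) 0 0 = 0 := by
    rw [dyadicAvg, show dyadicIco 0 0 = Ico 0 1 by simp [dyadicIco],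
      setIntegral_congr_set Ico_ae_eq_Icc, setIntegral_indicator measurableSet_Icc, inter_self,
      hf.2.1, mul_zero]
  set Q : ℕ → ℝ := fun m =>
    ∑ k ∈ Finset.range (2 ^ m), dyadicAvg ((Icc 0 1).indicator f) m k ^ 2 / 2 ^ m
  have hstep : ∀ m,
      Q (m + 1) - Q m = ∑ k ∈ Finset.range (2 ^ m), haarCoeff f m k ^ 2 / 2 ^ m :=
    fun m => by simp only [Q]; rw [sum_sq_dyadicAvg_succ hf.1]; ring
  calc ∫ x in Ico 0 1, dyadicAvg ((Icc 0 1).indicator f) n (dyadicIndex n x) ^ 2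
      = Q n - Q 0 := by
        rw [integral_comp_dyadicIndex (fun k => dyadicAvg ((Icc 0 1).indicator f) n k ^ 2)]
        simp [Q, hmean]
    _ = ∫ x in Ico 0 1, ∑ m ∈ Finset.range n, haarCoeff f m (dyadicIndex m x) ^ 2 := by
        rw [← Finset.sum_range_sub, integral_finsetSum _ fun m _ =>
          integrableOn_comp_dyadicIndex (fun k => haarCoeff f m k ^ 2) m]
        exact Finset.sum_congr rfl fun m _ =>
          (hstep m).trans (integral_comp_dyadicIndex (fun k => haarCoeff f m k ^ 2) m).symm
    _ ≤ ∫ _ in Ico 0 1, 1 :=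
        integral_mono_ae (integrable_finsetSum _ fun m _ =>
          integrableOn_comp_dyadicIndex (fun k => haarCoeff f m k ^ 2) m)
          (integrable_const 1) ((ae_sum_range_sq_haarCoeff_le_one hf).mono fun _ hx => hx n)
    _ = 1 := by simp

lemma memLp_two_and_integral_sq_le_one {f : ℝ → ℝ} (hf : Admissible f) :
    MemLp f 2 (volume.restrict (Icc 0 1)) ∧ ∫ x in Icc 0 1, f x ^ 2 ≤ 1 := by
  have hIco : volume.restrict (Ico (0 : ℝ) 1) = volume.restrict (Icc 0 1) :=
    Measure.restrict_congr_set Ico_ae_eq_Icc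
  have hlim : ∀ᵐ x ∂volume.restrict (Icc 0 1), Tendsto
      (fun n => dyadicAvg ((Icc 0 1).indicator f) n (dyadicIndex n x)) atTop (𝓝 (f x)) := by
    filter_upwards [ae_restrict_of_ae (ae_tendsto_dyadicAvg
        (hf.1.integrable_indicator measurableSet_Icc).locallyIntegrable),
      ae_restrict_mem measurableSet_Icc] with x hx hx01
    simpa [indicator_of_mem hx01] using hx hx01.1
  obtain ⟨hint, hle⟩ := integrable_sq_and_integral_sq_le_of_ae_tendsto
    (fun n => hIco ▸ integrableOn_comp_dyadicIndex
      (fun k => dyadicAvg ((Icc 0 1).indicator f) n k ^ 2) n)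
    (fun n => hIco ▸ integral_sq_dyadicAvg_le_one hf n) hf.1.aestronglyMeasurable hlim
  exact ⟨(memLp_two_iff_integrable_sq hf.1.aestronglyMeasurable).2 hint, hle⟩

end DyadicHaar

open DyadicHaar

theorem bellman_le_inv_one_add_sq :
    ∀ x : ℝ, 0 ≤ x → bellman x ≤ 1 / (1 + x ^ 2) := by
  intro x hx
  refine Real.sSup_le ?_ (by positivity)
  rintro _ ⟨f, hf, rfl⟩
  have : IsProbabilityMeasure (volume.restrict (Icc (0 : ℝ) 1)) := ⟨by simp⟩
  obtain ⟨hL2, hsq⟩ := memLp_two_and_integral_sq_le_one hf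
  have h := measureReal_ge_le_inv_one_add_sq hL2 hf.2.1 hsq hx
  rwa [measureReal_def, Measure.restrict_apply' measurableSet_Icc, inter_comm] at h
end
end

section
/- For every integer n ≥ 1, A(2^{−n}) = √(3/(4ⁿ − 1)), and the function f = √(3/(4ⁿ−1))·(1 − 2ⁿ·χ_{[0,2^{−n}]}) satisfies ∫_I f = 0, Sf ≤ 1 everywhere on I, and μ{f ≥ A(2^{−n})} = 1 − 2^{−n}. -/
open MeasureTheory

noncomputable section

/-- The nonlinear mean `M[a,b] = (a+b)/√(4+(a-b)²)`. -/
def nlMean (a b : ℝ) : ℝ := (a + b) / Real.sqrt (4 + (a - b) ^ 2)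

/-!
The recursion at `k = 1` gives `A(2^{-n-1}) = M[A(0), A(2^{-n})] = M[0, A(2^{-n})]`, and
`M[0, √t] = √(t / (4 + t))` sends `t = 3/(4ⁿ - 1)` to `3/(4ⁿ⁺¹ - 1)`; induction from
`A(1/2) = 1` gives the value of `A(2^{-n})`. For `f = c (1 - 2ⁿ χ_{[0,2^{-n}]})` with
`c = √(3/(4ⁿ - 1))` the only nonzero Haar coefficients are `a_{[0,2^{-m}]} = c 2^m` for `m < n`,
so `(Sf)² ≤ c² Σ_{m<n} 4^m = 1`.
-/

open Set

lemma haar_eq_indicator_sub (m k : ℕ) :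
    haar m k = (Ico ((2 * (k : ℝ) + 1) / 2 ^ (m + 1)) (((k : ℝ) + 1) / 2 ^ m)).indicator 1
      - (Ico ((k : ℝ) / 2 ^ m) ((2 * (k : ℝ) + 1) / 2 ^ (m + 1))).indicator 1 := by
  ext x
  simp only [haar, Pi.sub_apply, indicator_apply, Pi.one_apply, mem_Ico]
  split_ifs with hl hr <;> first | linarith [hl.2, hr.1] | norm_num

lemma integrableOn_indicator_Ico_one (u v : ℝ) (s : Set ℝ) :
    IntegrableOn ((Ico u v).indicator (1 : ℝ → ℝ)) s :=
  ((integrableOn_const measure_Ico_lt_top.ne).integrable_indicator measurableSet_Ico).integrableOn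

lemma integrableOn_haar (m k : ℕ) (s : Set ℝ) : IntegrableOn (haar m k) s := by
  rw [haar_eq_indicator_sub]
  exact (integrableOn_indicator_Ico_one _ _ s).sub (integrableOn_indicator_Ico_one _ _ s)

lemma volume_Icc_zero_inter_Ico {b u v : ℝ} (hu : 0 ≤ u) :
    volume (Icc 0 b ∩ Ico u v) = ENNReal.ofReal (min b v - u) := by
  apply le_antisymm
  · calc volume (Icc 0 b ∩ Ico u v) ≤ volume (Icc u (min b v)) :=
          measure_mono fun x hx => ⟨hx.2.1, le_min hx.1.2 hx.2.2.le⟩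
      _ = _ := Real.volume_Icc
  · calc ENNReal.ofReal (min b v - u) = volume (Ico u (min b v)) := Real.volume_Ico.symm
      _ ≤ volume (Icc 0 b ∩ Ico u v) := measure_mono fun x (hx : x ∈ Ico u (min b v)) =>
          ⟨⟨hu.trans hx.1, hx.2.le.trans (min_le_left _ _)⟩, hx.1,
            hx.2.trans_le (min_le_right _ _)⟩

lemma setIntegral_Icc_zero_indicator_Ico {b u v : ℝ} (hu : 0 ≤ u) :
    ∫ x in Icc 0 b, (Ico u v).indicator (1 : ℝ → ℝ) x = max (min b v - u) 0 := by
  rw [integral_indicator_one measurableSet_Ico, measureReal_restrict_apply measurableSet_Ico,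
    Measure.real, inter_comm, volume_Icc_zero_inter_Ico hu, ENNReal.toReal_ofReal']

lemma setIntegral_Icc_zero_haar (m k : ℕ) (b : ℝ) :
    ∫ x in Icc 0 b, haar m k x =
      max (min b (((k : ℝ) + 1) / 2 ^ m) - (2 * k + 1) / 2 ^ (m + 1)) 0
        - max (min b ((2 * (k : ℝ) + 1) / 2 ^ (m + 1)) - k / 2 ^ m) 0 := by
  simp only [haar_eq_indicator_sub, Pi.sub_apply]
  rw [integral_sub (integrableOn_indicator_Ico_one _ _ _)
    (integrableOn_indicator_Ico_one _ _ _), setIntegral_Icc_zero_indicator_Ico (by positivity),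
    setIntegral_Icc_zero_indicator_Ico (by positivity)]

lemma haar_left_le_mid_le_right (m k : ℕ) :
    (k : ℝ) / 2 ^ m ≤ (2 * k + 1) / 2 ^ (m + 1) ∧
      (2 * (k : ℝ) + 1) / 2 ^ (m + 1) ≤ (k + 1) / 2 ^ m := by
  constructor <;> rw [pow_succ] <;> field_simp <;> linarith

lemma setIntegral_Icc_zero_haar_of_right_le {m k : ℕ} {b : ℝ}
    (hb : ((k : ℝ) + 1) / 2 ^ m ≤ b) :
    ∫ x in Icc 0 b, haar m k x = 0 := by
  obtain ⟨hl, hr⟩ := haar_left_le_mid_le_right m k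
  have hmid : (2 * (k : ℝ) + 1) / 2 ^ (m + 1) - k / 2 ^ m =
      (k + 1) / 2 ^ m - (2 * k + 1) / 2 ^ (m + 1) := by
    rw [pow_succ]; field_simp; ring
  rw [setIntegral_Icc_zero_haar, min_eq_right hb, min_eq_right (hr.trans hb),
    max_eq_left (by linarith), max_eq_left (by linarith), hmid, sub_self]

lemma setIntegral_Icc_zero_haar_of_le_left {m k : ℕ} {b : ℝ} (hb : b ≤ (k : ℝ) / 2 ^ m) :
    ∫ x in Icc 0 b, haar m k x = 0 := by
  obtain ⟨hl, hr⟩ := haar_left_le_mid_le_right m k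
  rw [setIntegral_Icc_zero_haar, max_eq_right, max_eq_right, sub_self] <;>
    linarith [min_le_left b (((k : ℝ) + 1) / 2 ^ m),
      min_le_left b ((2 * (k : ℝ) + 1) / 2 ^ (m + 1))]

lemma setIntegral_Icc_zero_haar_zero {m : ℕ} {b : ℝ} (hb₀ : 0 ≤ b)
    (hb : b ≤ 1 / 2 ^ (m + 1)) :
    ∫ x in Icc 0 b, haar m 0 x = -b := by
  obtain ⟨-, hr⟩ := haar_left_le_mid_le_right m 0
  rw [setIntegral_Icc_zero_haar]
  simp only [Nat.cast_zero, mul_zero, zero_add, zero_div, sub_zero] at hr ⊢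
  rw [min_eq_left hb, min_eq_left (hb.trans hr), max_eq_right (by linarith),
    max_eq_left hb₀, zero_sub]

lemma setIntegral_Icc_zero_inv_two_pow_haar (n m k : ℕ) :
    ∫ x in Icc 0 ((2 : ℝ) ^ n)⁻¹, haar m k x =
      if m < n ∧ k = 0 then -((2 : ℝ) ^ n)⁻¹ else 0 := by
  -- `[0, 2^{-n}]` lies in the left half of `J = [k/2^m, (k+1)/2^m]` (when `m < n`, `k = 0`),
  -- ends where `J` starts, or covers `J`.
  split_ifs with h
  · obtain ⟨hmn, rfl⟩ := h
    apply setIntegral_Icc_zero_haar_zero (by positivity)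
    rw [one_div]
    exact inv_anti₀ (by positivity) (pow_le_pow_right₀ one_le_two hmn)
  rcases lt_or_ge m n with hmn | hnm
  · have hk : 1 ≤ k := by omega
    apply setIntegral_Icc_zero_haar_of_le_left
    calc ((2 : ℝ) ^ n)⁻¹ ≤ ((2 : ℝ) ^ m)⁻¹ :=
          inv_anti₀ (by positivity) (pow_le_pow_right₀ one_le_two hmn.le)
      _ = 1 / 2 ^ m := (one_div _).symm
      _ ≤ k / 2 ^ m := by gcongr; exact_mod_cast hk
  obtain ⟨d, rfl⟩ := Nat.exists_eq_add_of_le hnm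
  rcases le_or_gt (k + 1) (2 ^ d) with hkd | hkd
  · apply setIntegral_Icc_zero_haar_of_right_le
    calc ((k : ℝ) + 1) / 2 ^ (n + d) ≤ 2 ^ d / 2 ^ (n + d) := by gcongr; exact_mod_cast hkd
      _ = ((2 : ℝ) ^ n)⁻¹ := by rw [pow_add]; field_simp
  · apply setIntegral_Icc_zero_haar_of_le_left
    calc ((2 : ℝ) ^ n)⁻¹ = 2 ^ d / 2 ^ (n + d) := by rw [pow_add]; field_simp
      _ ≤ k / 2 ^ (n + d) := by gcongr; exact_mod_cast Nat.lt_succ_iff.mp hkd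

def dyadicStep (c : ℝ) (n : ℕ) (y : ℝ) : ℝ :=
  c * (1 - 2 ^ n * (Icc (0 : ℝ) ((2 : ℝ) ^ n)⁻¹).indicator 1 y)

lemma inv_two_pow_le_one (n : ℕ) : ((2 : ℝ) ^ n)⁻¹ ≤ 1 :=
  inv_le_one_of_one_le₀ (one_le_pow₀ one_le_two)

lemma haarCoeff_dyadicStep (c : ℝ) (n m k : ℕ) :
    haarCoeff (dyadicStep c n) m k = if m < n ∧ k = 0 then c * 2 ^ m else 0 := by
  have hsplit : ∀ x, dyadicStep c n x * haar m k x =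
      c * haar m k x - c * 2 ^ n * (Icc (0 : ℝ) ((2 : ℝ) ^ n)⁻¹).indicator (haar m k) x := by
    intro x
    by_cases hx : x ∈ Icc (0 : ℝ) ((2 : ℝ) ^ n)⁻¹
    · simp only [dyadicStep, indicator_of_mem hx, Pi.one_apply]; ring
    · simp only [dyadicStep, indicator_of_notMem hx]; ring
  have hint := integrableOn_haar m k (Icc 0 1)
  have hI : ∫ x in Icc (0 : ℝ) 1, haar m k x = 0 := by
    simpa using setIntegral_Icc_zero_inv_two_pow_haar 0 m k
  rw [haarCoeff, integral_congr_ae (.of_forall hsplit),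
    integral_sub (hint.const_mul c) ((hint.indicator measurableSet_Icc).const_mul _),
    integral_const_mul, integral_const_mul, hI, setIntegral_indicator measurableSet_Icc,
    inter_eq_right.2 (Icc_subset_Icc_right (inv_two_pow_le_one n)),
    setIntegral_Icc_zero_inv_two_pow_haar]
  split_ifs
  · field_simp; ring
  · ring

lemma sqFn_le_sqrt_sum_of_haarCoeff_eq_zero {f : ℝ → ℝ} (s : Finset (ℕ × ℕ))
    (hs : ∀ p ∉ s, haarCoeff f p.1 p.2 = 0) (x : ℝ) :
    sqFn f x ≤ √(∑ p ∈ s, haarCoeff f p.1 p.2 ^ 2) := by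
  rw [sqFn, tsum_eq_sum fun p hp => by simp [hs p hp]]
  gcongr with p
  exact mul_le_of_le_one_right (sq_nonneg _)
    (indicator_apply_le' (fun _ => le_rfl) fun _ => zero_le_one)

lemma sqFn_dyadicStep_le (c : ℝ) (n : ℕ) (x : ℝ) :
    sqFn (dyadicStep c n) x ≤ √(c ^ 2 * ((4 ^ n - 1) / 3)) := by
  refine (sqFn_le_sqrt_sum_of_haarCoeff_eq_zero (Finset.range n ×ˢ {0})
    (fun p hp => ?_) x).trans_eq ?_
  · rw [Finset.mem_product, Finset.mem_range, Finset.mem_singleton] at hp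
    rw [haarCoeff_dyadicStep, if_neg hp]
  · congr 1
    have h4 : ∑ m ∈ Finset.range n, (4 : ℝ) ^ m = (4 ^ n - 1) / 3 := by
      rw [geom_sum_eq (by norm_num)]; norm_num
    rw [Finset.sum_product, ← h4, Finset.mul_sum]
    refine Finset.sum_congr rfl fun m hm => ?_
    rw [Finset.sum_singleton, haarCoeff_dyadicStep, if_pos ⟨Finset.mem_range.1 hm, rfl⟩,
      show (4 : ℝ) = 2 ^ 2 by norm_num, ← pow_mul]
    ring

lemma integral_dyadicStep (c : ℝ) (n : ℕ) : ∫ y in Icc (0 : ℝ) 1, dyadicStep c n y = 0 := by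
  have hind :
      ∫ y in Icc (0 : ℝ) 1, (Icc (0 : ℝ) ((2 : ℝ) ^ n)⁻¹).indicator 1 y = ((2 : ℝ) ^ n)⁻¹ := by
    rw [integral_indicator_one measurableSet_Icc, measureReal_restrict_apply measurableSet_Icc,
      inter_eq_left.2 (Icc_subset_Icc_right (inv_two_pow_le_one n)),
      Real.volume_real_Icc_of_le (by positivity), sub_zero]
  simp only [dyadicStep, mul_sub, mul_one, ← mul_assoc]
  rw [integral_sub (integrable_const c) (Integrable.const_mul ?_ _), integral_const_mul, hind,
    setIntegral_const, Real.volume_real_Icc_of_le zero_le_one]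
  · field_simp
    ring
  · exact (integrable_const 1).indicator measurableSet_Icc

lemma le_dyadicStep_iff {c : ℝ} (hc : 0 < c) {n : ℕ} (hn : 1 ≤ n) {y : ℝ} :
    c ≤ dyadicStep c n y ↔ y ∉ Icc 0 ((2 : ℝ) ^ n)⁻¹ := by
  by_cases hy : y ∈ Icc (0 : ℝ) ((2 : ℝ) ^ n)⁻¹
  · have h2n : (1 : ℝ) < 2 ^ n := one_lt_pow₀ one_lt_two (by omega)
    simp only [dyadicStep, indicator_of_mem hy, Pi.one_apply, hy, not_true_eq_false, iff_false,
      not_le]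
    nlinarith
  · simp [dyadicStep, hy]

lemma setOf_le_dyadicStep {c : ℝ} (hc : 0 < c) {n : ℕ} (hn : 1 ≤ n) :
    {y ∈ Icc (0 : ℝ) 1 | c ≤ dyadicStep c n y} = Ioc ((2 : ℝ) ^ n)⁻¹ 1 := by
  have hb : (0 : ℝ) < ((2 : ℝ) ^ n)⁻¹ := by positivity
  ext y
  simp only [mem_ofPred_eq, le_dyadicStep_iff hc hn, mem_Icc, mem_Ioc]
  constructor
  · rintro ⟨⟨hy₀, hy₁⟩, hy⟩
    exact ⟨lt_of_not_ge fun h => hy ⟨hy₀, h⟩, hy₁⟩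
  · rintro ⟨hy, hy₁⟩
    exact ⟨⟨by linarith, hy₁⟩, fun h => h.2.not_gt hy⟩

lemma four_pow_sub_one_pos {n : ℕ} (hn : 1 ≤ n) : (0 : ℝ) < 4 ^ n - 1 := by
  linarith [one_lt_pow₀ (by norm_num : (1 : ℝ) < 4) (by omega : n ≠ 0)]

lemma nlMean_zero_sqrt_three_div {n : ℕ} (hn : 1 ≤ n) :
    nlMean 0 √(3 / (4 ^ n - 1)) = √(3 / (4 ^ (n + 1) - 1)) := by
  have hD := four_pow_sub_one_pos hn
  have hD' := four_pow_sub_one_pos (Nat.le_succ_of_le hn)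
  have ht : (0 : ℝ) ≤ 3 / (4 ^ n - 1) := by positivity
  rw [nlMean, zero_add, zero_sub, neg_sq, Real.sq_sqrt ht, ← Real.sqrt_div' _ (by positivity)]
  congr 1
  field_simp
  ring

lemma apply_inv_two_pow_eq_sqrt {A : ℝ → ℝ} (hA0 : A 0 = 0) (hAhalf : A (1 / 2) = 1)
    (hrec : ∀ n : ℕ, 1 ≤ n → A ((2 ^ (n + 1))⁻¹) = nlMean (A 0) (A ((2 ^ n)⁻¹)))
    {n : ℕ} (hn : 1 ≤ n) : A ((2 ^ n)⁻¹) = √(3 / (4 ^ n - 1)) := by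
  induction n, hn using Nat.le_induction with
  | base => norm_num [hAhalf]
  | succ n hn ih => rw [hrec n hn, hA0, ih, nlMean_zero_sqrt_three_div hn]

theorem extremal_function_two_values_general
    (A : ℝ → ℝ)
    (hA0 : A 0 = 0) (hAhalf : A (1 / 2) = 1)
    (hArec : ∀ n : ℕ, 2 ≤ n → ∀ k : ℕ, Odd k → k < 2 ^ (n - 1) →
      A ((k : ℝ) / 2 ^ n) =
        nlMean (A (((k : ℝ) - 1) / 2 ^ n)) (A (((k : ℝ) + 1) / 2 ^ n)))
    (n : ℕ) (hn : 1 ≤ n) :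
    A (((2 : ℝ) ^ n)⁻¹) = Real.sqrt (3 / (4 ^ n - 1)) ∧
      (let f : ℝ → ℝ := fun y =>
        Real.sqrt (3 / (4 ^ n - 1)) *
          (1 - 2 ^ n * (Set.Icc (0 : ℝ) (((2 : ℝ) ^ n)⁻¹)).indicator 1 y)
      (∫ y in Set.Icc (0 : ℝ) 1, f y) = 0 ∧
        (∀ y ∈ Set.Icc (0 : ℝ) 1, sqFn f y ≤ 1) ∧
        (volume { y ∈ Set.Icc (0 : ℝ) 1 | A (((2 : ℝ) ^ n)⁻¹) ≤ f y }).toReal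
          = 1 - ((2 : ℝ) ^ n)⁻¹) := by
  have hrec (m : ℕ) (hm : 1 ≤ m) :
      A ((2 ^ (m + 1))⁻¹) = nlMean (A 0) (A ((2 ^ m)⁻¹)) := by
    have h := hArec (m + 1) (by omega) 1 odd_one (Nat.one_lt_two_pow (by omega))
    rw [pow_succ] at h ⊢
    convert h using 3 <;> field_simp <;> norm_num
  have hA := apply_inv_two_pow_eq_sqrt hA0 hAhalf hrec hn
  have hD := four_pow_sub_one_pos hn
  refine ⟨hA, integral_dyadicStep _ n, fun y _ => (sqFn_dyadicStep_le _ n y).trans_eq ?_, ?_⟩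
  · rw [Real.sq_sqrt (div_pos three_pos hD).le, div_mul_div_cancel₀ hD.ne',
      div_self three_ne_zero, Real.sqrt_one]
  · show (volume {y ∈ Icc (0 : ℝ) 1 | _ ≤ dyadicStep _ n y}).toReal = _
    rw [hA, setOf_le_dyadicStep (Real.sqrt_pos.2 (div_pos three_pos hD)) hn, Real.volume_Ioc,
      ENNReal.toReal_ofReal (by linarith [inv_two_pow_le_one n])]

theorem extremal_function_two_values
    (A : ℝ → ℝ)
    (hAcont : ContinuousOn A (Set.Icc 0 (1 / 2)))
    (hA0 : A 0 = 0) (hAhalf : A (1 / 2) = 1)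
    (hArec : ∀ n : ℕ, 2 ≤ n → ∀ k : ℕ, Odd k → k < 2 ^ (n - 1) →
      A ((k : ℝ) / 2 ^ n) =
        nlMean (A (((k : ℝ) - 1) / 2 ^ n)) (A (((k : ℝ) + 1) / 2 ^ n)))
    (n : ℕ) (hn : 1 ≤ n) :
    A (((2 : ℝ) ^ n)⁻¹) = Real.sqrt (3 / (4 ^ n - 1)) ∧
      (let f : ℝ → ℝ := fun y =>
        Real.sqrt (3 / (4 ^ n - 1)) *
          (1 - 2 ^ n * (Set.Icc (0 : ℝ) (((2 : ℝ) ^ n)⁻¹)).indicator 1 y)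
      (∫ y in Set.Icc (0 : ℝ) 1, f y) = 0 ∧
        (∀ y ∈ Set.Icc (0 : ℝ) 1, sqFn f y ≤ 1) ∧
        (volume { y ∈ Set.Icc (0 : ℝ) 1 | A (((2 : ℝ) ^ n)⁻¹) ≤ f y }).toReal
          = 1 - ((2 : ℝ) ^ n)⁻¹) :=
  extremal_function_two_values_general A hA0 hAhalf hArec n hn
end
end

section
/- For every x ≥ √3 and every τ ∈ [0,1) with xτ < 1, one has (1/2)·log((1+xτ)/(1−xτ)) − xτ/(1−τ²) ≥ 0; equivalently, (1+xτ)·e^{−xτ/(1−τ²)} ≥ (1−xτ)·e^{xτ/(1−τ²)}. -/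
/-!
With `t = xτ`, the hypothesis `x ≥ √3` gives `τ² ≤ t²/3`, so it suffices to show
`t / (1 - t²/3) ≤ artanh t`. Both sides are odd power series in `t`: the left one is
`∑ t^(2k+1) / 3^k` and the right one `∑ t^(2k+1) / (2k+1)`, and `2k + 1 ≤ 3^k` termwise.
The exponential form is the same inequality after exponentiating.
-/

lemma hasSum_geometric_odd_pow (t : ℝ) (ht : |t| < 1) :
    HasSum (fun k : ℕ => 2 * (1 / 3 ^ k) * t ^ (2 * k + 1)) (2 * t / (1 - t ^ 2 / 3)) := by
  have hr : t ^ 2 / 3 < 1 := by nlinarith [sq_abs t, abs_nonneg t]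
  have h := (hasSum_geometric_of_lt_one (by positivity) hr).mul_left (2 * t)
  have hterm : (fun k : ℕ => 2 * t * (t ^ 2 / 3) ^ k) =
      fun k : ℕ => 2 * (1 / 3 ^ k) * t ^ (2 * k + 1) := by
    funext k
    rw [div_pow, ← pow_mul, pow_succ]
    ring
  rwa [hterm, ← div_eq_mul_inv] at h

lemma div_one_sub_sq_div_three_le_half_log {t : ℝ} (ht0 : 0 ≤ t) (ht1 : t < 1) :
    t / (1 - t ^ 2 / 3) ≤ 1 / 2 * Real.log ((1 + t) / (1 - t)) := by
  have ht : |t| < 1 := by rwa [abs_of_nonneg ht0]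
  have hcoeff (k : ℕ) : 2 * (k : ℝ) + 1 ≤ 3 ^ k := by
    have h := one_add_mul_le_pow (show (-2 : ℝ) ≤ 2 by norm_num) k
    norm_num at h
    linarith
  have hsum := hasSum_le (fun k => by gcongr; exact hcoeff k)
    (hasSum_geometric_odd_pow t ht) (Real.hasSum_log_sub_log_of_abs_lt_one ht)
  rw [Real.log_div (by linarith) (by linarith)]
  linarith [mul_div_assoc 2 t (1 - t ^ 2 / 3)]

lemma mul_exp_le_mul_exp_neg_of_le_half_log {a b c : ℝ} (ha : 0 < a) (hb : 0 < b)
    (h : c ≤ 1 / 2 * Real.log (a / b)) : b * Real.exp c ≤ a * Real.exp (-c) := by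
  have hexp : Real.exp (2 * c) ≤ a / b :=
    (Real.le_log_iff_exp_le (div_pos ha hb)).mp (by linarith)
  calc b * Real.exp c = b * Real.exp (2 * c) * Real.exp (-c) := by
        rw [mul_assoc, ← Real.exp_add]; ring_nf
    _ ≤ b * (a / b) * Real.exp (-c) := by gcongr
    _ = a * Real.exp (-c) := by field_simp

theorem log_inequality (x τ : ℝ) (hx : Real.sqrt 3 ≤ x)
    (hτ : τ ∈ Set.Ico (0 : ℝ) 1) (hxτ : x * τ < 1) :
    0 ≤ 1 / 2 * Real.log ((1 + x * τ) / (1 - x * τ)) - x * τ / (1 - τ ^ 2) ∧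
      (1 - x * τ) * Real.exp (x * τ / (1 - τ ^ 2)) ≤
        (1 + x * τ) * Real.exp (-(x * τ) / (1 - τ ^ 2)) := by
  obtain ⟨hτ0, hτ1⟩ := hτ
  have hx0 : 0 ≤ x := (Real.sqrt_nonneg 3).trans hx
  have hx3 : 3 ≤ x ^ 2 := (Real.sqrt_le_left hx0).mp hx
  set t := x * τ
  have ht0 : 0 ≤ t := by positivity
  have hτt : τ ^ 2 ≤ t ^ 2 / 3 := by
    have := mul_le_mul_of_nonneg_right hx3 (sq_nonneg τ)
    rw [mul_pow]
    linarith
  have hbound : t / (1 - τ ^ 2) ≤ 1 / 2 * Real.log ((1 + t) / (1 - t)) :=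
    calc t / (1 - τ ^ 2) ≤ t / (1 - t ^ 2 / 3) := by
          gcongr
          nlinarith
      _ ≤ _ := div_one_sub_sq_div_three_le_half_log ht0 hxτ
  refine ⟨sub_nonneg.mpr hbound, ?_⟩
  rw [neg_div]
  exact mul_exp_le_mul_exp_neg_of_le_half_log (by linarith) (by linarith) hbound
end

section
/- For every t ∈ [0,1/2], A(t) ≤ 2t. -/
open MeasureTheory

noncomputable section

lemma nlMean_le_of_le (a b x y : ℝ) (ha : a ≤ x) (hb : b ≤ y) (hxy : 0 ≤ x + y) :
    nlMean a b ≤ (x + y) / 2 := by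
  have hs : (2 : ℝ) ≤ Real.sqrt (4 + (a - b) ^ 2) := by
    have : Real.sqrt 4 ≤ Real.sqrt (4 + (a - b) ^ 2) := Real.sqrt_le_sqrt (by nlinarith [sq_nonneg (a - b)])
    have h4 : Real.sqrt 4 = 2 := by
      rw [show (4 : ℝ) = 2 ^ 2 by norm_num, Real.sqrt_sq (by norm_num : (0:ℝ) ≤ 2)]
    linarith
  have hspos : (0 : ℝ) < Real.sqrt (4 + (a - b) ^ 2) := by linarith
  unfold nlMean
  rcases le_or_gt (a + b) 0 with h | h
  · have h1 : (a + b) / Real.sqrt (4 + (a - b) ^ 2) ≤ 0 := div_nonpos_iff.2 (Or.inr ⟨h, hspos.le⟩)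
    linarith [div_nonneg hxy (by norm_num : (0:ℝ) ≤ 2)]
  · calc (a + b) / Real.sqrt (4 + (a - b) ^ 2) ≤ (a + b) / 2 := by
          gcongr
      _ ≤ (x + y) / 2 := by gcongr <;> linarith

theorem bridge_le_two_mul
    (A : ℝ → ℝ)
    (hAcont : ContinuousOn A (Set.Icc 0 (1 / 2)))
    (hA0 : A 0 = 0) (hAhalf : A (1 / 2) = 1)
    (hArec : ∀ n : ℕ, 2 ≤ n → ∀ k : ℕ, Odd k → k < 2 ^ (n - 1) →
      A ((k : ℝ) / 2 ^ n) =
        nlMean (A (((k : ℝ) - 1) / 2 ^ n)) (A (((k : ℝ) + 1) / 2 ^ n))) :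
    ∀ t ∈ Set.Icc (0 : ℝ) (1 / 2), A t ≤ 2 * t := by
  -- Dyadic claim
  have Q : ∀ m : ℕ, ∀ k : ℕ, k ≤ 2 ^ m → A ((k : ℝ) / 2 ^ (m + 1)) ≤ (k : ℝ) / 2 ^ m := by
    intro m
    induction m with
    | zero =>
        intro k hk
        interval_cases k
        · simpa using hA0.le
        · norm_num [hAhalf]
    | succ m ih =>
        intro k hk
        rcases Nat.even_or_odd k with ⟨j, hj⟩ | hodd
        · -- even: k = 2j
          have hj' : j ≤ 2 ^ m := by
            have h2 : (2:ℕ) ^ (m+1) = 2 * 2 ^ m := by ring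
            omega
          have := ih j hj'
          have e1 : ((k : ℝ)) / 2 ^ (m + 1 + 1) = (j : ℝ) / 2 ^ (m + 1) := by
            subst hj; push_cast; ring
          have e2 : ((k : ℝ)) / 2 ^ (m + 1) = (j : ℝ) / 2 ^ m := by
            subst hj; push_cast; ring
          rw [e1, e2]; exact this
        · -- odd: k = 2j+1
          obtain ⟨j, hj⟩ := hodd
          have hpow : (2:ℕ) ^ (m+1) = 2 * 2 ^ m := by ring
          have hklt : k < 2 ^ (m + 1) := by
            rcases lt_or_eq_of_le hk with h | h
            · exact h
            · omega
          have hrec := hArec (m + 2) (by omega) k ⟨j, hj⟩ (by simpa using hklt)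
          have e0 : ((k : ℝ)) / 2 ^ (m + 2) = (k : ℝ) / 2 ^ (m + 1 + 1) := by norm_num
          have e1 : ((k : ℝ) - 1) / 2 ^ (m + 2) = (j : ℝ) / 2 ^ (m + 1) := by
            subst hj; push_cast; ring
          have e2 : ((k : ℝ) + 1) / 2 ^ (m + 2) = ((j + 1 : ℕ) : ℝ) / 2 ^ (m + 1) := by
            subst hj; push_cast; ring
          have hj1 : j ≤ 2 ^ m := by omega
          have hj2 : j + 1 ≤ 2 ^ m := by omega
          have IH1 := ih j hj1
          have IH2 := ih (j + 1) hj2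
          have hsum : (0 : ℝ) ≤ (j : ℝ) / 2 ^ m + ((j + 1 : ℕ) : ℝ) / 2 ^ m := by positivity
          have hmain := nlMean_le_of_le _ _ _ _ IH1 IH2 hsum
          rw [← e0] at *
          rw [hrec, e1, e2]
          calc nlMean (A ((j : ℝ) / 2 ^ (m + 1))) (A (((j + 1 : ℕ) : ℝ) / 2 ^ (m + 1)))
              ≤ ((j : ℝ) / 2 ^ m + ((j + 1 : ℕ) : ℝ) / 2 ^ m) / 2 := hmain
            _ = (k : ℝ) / 2 ^ (m + 1) := by subst hj; push_cast; ring
  -- density + continuity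
  intro t ht
  obtain ⟨ht0, ht1⟩ := ht
  set tm : ℕ → ℝ := fun m => (⌊t * 2 ^ (m + 1)⌋₊ : ℝ) / 2 ^ (m + 1) with htm
  have hkle : ∀ m : ℕ, ⌊t * 2 ^ (m + 1)⌋₊ ≤ 2 ^ m := by
    intro m
    have h1 : t * 2 ^ (m + 1) ≤ ((2 ^ m : ℕ) : ℝ) := by
      push_cast
      have : t * 2 ^ (m + 1) ≤ (1 / 2) * 2 ^ (m + 1) := by
        apply mul_le_mul_of_nonneg_right ht1 (by positivity)
      calc t * 2 ^ (m + 1) ≤ (1 / 2) * 2 ^ (m + 1) := this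
        _ = 2 ^ m := by ring
    calc ⌊t * 2 ^ (m + 1)⌋₊ ≤ ⌊((2 ^ m : ℕ) : ℝ)⌋₊ := Nat.floor_mono h1
      _ = 2 ^ m := Nat.floor_natCast _
  have htm_mem : ∀ m, tm m ∈ Set.Icc (0 : ℝ) (1 / 2) := by
    intro m
    constructor
    · positivity
    · have := hkle m
      have h2 : ((⌊t * 2 ^ (m + 1)⌋₊ : ℝ)) ≤ (2 : ℝ) ^ m := by
        exact_mod_cast Nat.cast_le.2 this |>.trans_eq (by push_cast; ring)
      rw [htm]
      rw [div_le_iff₀ (by positivity)]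
      calc ((⌊t * 2 ^ (m + 1)⌋₊ : ℝ)) ≤ (2:ℝ) ^ m := h2
        _ = 1 / 2 * 2 ^ (m + 1) := by ring
  have htm_le : ∀ m, tm m ≤ t := by
    intro m
    rw [htm, div_le_iff₀ (by positivity)]
    exact Nat.floor_le (by positivity)
  have htm_lb : ∀ m, t - (1 / 2) ^ (m + 1) ≤ tm m := by
    intro m
    have h := Nat.lt_floor_add_one (t * 2 ^ (m + 1))
    rw [htm]
    rw [le_div_iff₀ (by positivity : (0:ℝ) < 2 ^ (m + 1))]
    have : (1 / 2 : ℝ) ^ (m + 1) * 2 ^ (m + 1) = 1 := by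
      rw [← mul_pow]; norm_num
    nlinarith [h]
  have htm_tendsto : Filter.Tendsto tm Filter.atTop (nhds t) := by
    have hl : Filter.Tendsto (fun m : ℕ => t - (1 / 2 : ℝ) ^ (m + 1)) Filter.atTop (nhds t) := by
      have : Filter.Tendsto (fun m : ℕ => (1 / 2 : ℝ) ^ (m + 1)) Filter.atTop (nhds 0) := by
        have h0 : Filter.Tendsto (fun m : ℕ => (1 / 2 : ℝ) ^ m) Filter.atTop (nhds 0) :=
          tendsto_pow_atTop_nhds_zero_of_lt_one (by norm_num) (by norm_num)
        exact h0.comp (Filter.tendsto_add_atTop_nat 1)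
      simpa using Filter.Tendsto.sub (tendsto_const_nhds) this
    exact tendsto_of_tendsto_of_tendsto_of_le_of_le hl tendsto_const_nhds htm_lb htm_le
  have hAt : Filter.Tendsto (fun m => A (tm m)) Filter.atTop (nhds (A t)) := by
    have hcw : ContinuousWithinAt A (Set.Icc 0 (1 / 2)) t := hAcont t ⟨ht0, ht1⟩
    apply hcw.tendsto.comp
    exact tendsto_nhdsWithin_of_tendsto_nhds_of_eventually_within _ htm_tendsto
      (Filter.Eventually.of_forall htm_mem)
  have h2t : Filter.Tendsto (fun m => 2 * tm m) Filter.atTop (nhds (2 * t)) :=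
    htm_tendsto.const_mul 2
  have hle : ∀ m, A (tm m) ≤ 2 * tm m := by
    intro m
    have := Q m ⌊t * 2 ^ (m + 1)⌋₊ (hkle m)
    rw [htm]
    calc A ((⌊t * 2 ^ (m + 1)⌋₊ : ℝ) / 2 ^ (m + 1)) ≤ (⌊t * 2 ^ (m + 1)⌋₊ : ℝ) / 2 ^ m := this
      _ = 2 * ((⌊t * 2 ^ (m + 1)⌋₊ : ℝ) / 2 ^ (m + 1)) := by ring
  exact le_of_tendsto_of_tendsto' hAt h2t hle
end
end

section
/- For every n ≥ 1 and every pair of neighboring points s < t of Dₙ (i.e. s, t ∈ Dₙ with t − s = 2^{−n}), one has 0 < A(t) − A(s) ≤ (3/4)^{n−1}; consequently A is Hölder continuous on [0,1/2] with exponent α = log₂(4/3). -/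
open MeasureTheory

noncomputable section

/-!
For `0 ≤ a < b ≤ 1` the nonlinear mean lies strictly between `a` and `b` and splits `[a, b]` into
two pieces of length at most `3/4 (b - a)`, because `2 ≤ √(4 + (b - a)²) ≤ 2 + (b - a)² / 4`.
Induction over the levels then gives the increment bounds, the values on each level being
increasing from `A 0 = 0` to `A (1/2) = 1`. They make `A` increasing on dyadic points, hence on
`[0, 1/2]` by continuity, so two points at distance at most `2^{-(n+1)}` lie between dyadic points
of level `n + 1` at most two steps apart, and `|A s - A t| ≤ 2 (3/4)^n`. Finally
`(3/4)^n = (2^{-n})^{log₂(4/3)}`.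
-/

open Set Filter Topology

lemma nlMean_sub_mem_Ioc {a b : ℝ} (ha : 0 ≤ a) (hab : a < b) (hb : b ≤ 1) :
    nlMean a b - a ∈ Ioc 0 (3 / 4 * (b - a)) ∧ b - nlMean a b ∈ Ioc 0 (3 / 4 * (b - a)) := by
  set s := √(4 + (a - b) ^ 2) with hs
  have hs_nonneg : 0 ≤ s := Real.sqrt_nonneg _
  have hs_sq : s ^ 2 = 4 + (b - a) ^ 2 := by rw [hs, Real.sq_sqrt (by positivity)]; ring
  have hs_lower : 2 ≤ s := by nlinarith
  have hs_upper : s ≤ 2 + (b - a) ^ 2 / 4 := by nlinarith [sq_nonneg (b - a)]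
  have hs_pos : 0 < s := by linarith
  have hM : nlMean a b = (a + b) / s := rfl
  refine ⟨⟨?_, ?_⟩, ⟨?_, ?_⟩⟩
  · have : a < (a + b) / s := by rw [lt_div_iff₀ hs_pos]; nlinarith
    linarith
  · have : (a + b) / s ≤ a + 3 / 4 * (b - a) := by rw [div_le_iff₀ hs_pos]; nlinarith
    linarith
  · have : (a + b) / s < b := by rw [div_lt_iff₀ hs_pos]; nlinarith
    linarith
  · have : b - 3 / 4 * (b - a) ≤ (a + b) / s := by rw [le_div_iff₀ hs_pos]; nlinarith
    linarith

lemma sub_mem_Icc_of_forall_succ_sub_mem_Icc {f : ℕ → ℝ} {c : ℝ} {N : ℕ}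
    (hf : ∀ i < N, f (i + 1) - f i ∈ Icc 0 c) {j l : ℕ} (hjl : j ≤ l) (hlN : l ≤ N) :
    f l - f j ∈ Icc 0 (((l : ℝ) - j) * c) := by
  induction l, hjl using Nat.le_induction with
  | base => simp
  | succ l hjl ih =>
    obtain ⟨h₀, h₁⟩ := ih (by omega)
    obtain ⟨g₀, g₁⟩ := hf l (by omega)
    push_cast
    constructor <;> linarith

/-- Level `n` is the paper's `D_{n+1}`, so that the increment bound reads `(3/4)^n`. -/
def DyadicIncrementBound (f : ℝ → ℝ) (n : ℕ) : Prop :=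
  ∀ k : ℕ, k < 2 ^ n → f ((k + 1) / 2 ^ (n + 1)) - f (k / 2 ^ (n + 1)) ∈ Ioc 0 ((3 / 4) ^ n)

lemma DyadicIncrementBound.sub_mem_Icc {f : ℝ → ℝ} {n : ℕ} (hf : DyadicIncrementBound f n)
    {j l : ℕ} (hjl : j ≤ l) (hl : l ≤ 2 ^ n) :
    f (l / 2 ^ (n + 1)) - f (j / 2 ^ (n + 1)) ∈ Icc 0 (((l : ℝ) - j) * (3 / 4) ^ n) :=
  sub_mem_Icc_of_forall_succ_sub_mem_Icc (f := fun i : ℕ => f (i / 2 ^ (n + 1)))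
    (fun i hi => by push_cast; exact Ioc_subset_Icc_self (hf i hi)) hjl hl

lemma div_two_pow_succ_mem_Icc {k n : ℕ} (hk : k ≤ 2 ^ n) :
    (k : ℝ) / 2 ^ (n + 1) ∈ Icc 0 (1 / 2) := by
  refine ⟨by positivity, ?_⟩
  rw [div_le_iff₀ (by positivity), pow_succ]
  have : (k : ℝ) ≤ 2 ^ n := by exact_mod_cast hk
  linarith

lemma two_pow_div_two_pow_succ (n : ℕ) : (2 : ℝ) ^ n / 2 ^ (n + 1) = 1 / 2 := by
  rw [pow_succ]; field_simp

lemma bridge_odd_eq_nlMean {A : ℝ → ℝ}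
    (hArec : ∀ n : ℕ, 2 ≤ n → ∀ k : ℕ, Odd k → k < 2 ^ (n - 1) →
      A ((k : ℝ) / 2 ^ n) =
        nlMean (A (((k : ℝ) - 1) / 2 ^ n)) (A (((k : ℝ) + 1) / 2 ^ n)))
    {n q : ℕ} (hq : q < 2 ^ n) :
    A ((2 * q + 1) / 2 ^ (n + 2)) = nlMean (A (q / 2 ^ (n + 1))) (A ((q + 1) / 2 ^ (n + 1))) := by
  have h := hArec (n + 2) le_add_self (2 * q + 1) (odd_two_mul_add_one q)
    (by rw [show n + 2 - 1 = n + 1 by omega, pow_succ]; omega)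
  push_cast at h
  rw [h]
  congr 2 <;> (rw [pow_succ]; field_simp; ring)

lemma dyadicIncrementBound_of_bridge {A : ℝ → ℝ} (hA0 : A 0 = 0) (hAhalf : A (1 / 2) = 1)
    (hArec : ∀ n : ℕ, 2 ≤ n → ∀ k : ℕ, Odd k → k < 2 ^ (n - 1) →
      A ((k : ℝ) / 2 ^ n) =
        nlMean (A (((k : ℝ) - 1) / 2 ^ n)) (A (((k : ℝ) + 1) / 2 ^ n)))
    (n : ℕ) : DyadicIncrementBound A n := by
  induction n with
  | zero =>
    intro k hk
    obtain rfl : k = 0 := by omega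
    norm_num [hA0, hAhalf]
  | succ n ih =>
    have hval (q : ℕ) (hq : q ≤ 2 ^ n) : A ((q : ℝ) / 2 ^ (n + 1)) ∈ Icc 0 1 := by
      have h₀ := (ih.sub_mem_Icc (Nat.zero_le q) hq).1
      have h₁ := (ih.sub_mem_Icc hq le_rfl).1
      rw [Nat.cast_zero, zero_div, hA0] at h₀
      rw [Nat.cast_pow, Nat.cast_ofNat, two_pow_div_two_pow_succ, hAhalf] at h₁
      constructor <;> linarith
    have hhalf (x : ℝ) : 2 * x / 2 ^ (n + 1 + 1) = x / 2 ^ (n + 1) := by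
      rw [pow_succ]; field_simp
    intro k hk
    obtain ⟨q, rfl | rfl⟩ := Nat.even_or_odd' k
    all_goals
      have hq : q < 2 ^ n := by rw [pow_succ] at hk; omega
      have hchild := nlMean_sub_mem_Ioc (hval q hq.le).1 (sub_pos.1 (ih q hq).1)
        (by simpa using (hval (q + 1) hq).2)
      have hstep : 3 / 4 * (A (((q : ℝ) + 1) / 2 ^ (n + 1)) - A ((q : ℝ) / 2 ^ (n + 1))) ≤
          (3 / 4) ^ (n + 1) := by
        rw [pow_succ' (3 / 4 : ℝ)]
        gcongr
        exact (ih q hq).2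
      push_cast
    · rw [hhalf, bridge_odd_eq_nlMean hArec hq]
      exact ⟨hchild.1.1, hchild.1.2.trans hstep⟩
    · rw [show (2 * q + 1 + 1 : ℝ) = 2 * (q + 1) by ring, hhalf, bridge_odd_eq_nlMean hArec hq]
      exact ⟨hchild.2.1, hchild.2.2.trans hstep⟩

lemma floor_mul_two_pow_succ_le {u : ℝ} (hu : u ≤ 1 / 2) (m : ℕ) :
    ⌊u * 2 ^ (m + 1)⌋₊ ≤ 2 ^ m := by
  apply Nat.floor_le_of_le
  rw [pow_succ]
  push_cast
  nlinarith [pow_pos (two_pos (α := ℝ)) m]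

lemma tendsto_comp_floor_mul_two_pow_div {f : ℝ → ℝ} {b u : ℝ}
    (hf : ContinuousOn f (Icc 0 b)) (hu : u ∈ Icc 0 b) :
    Tendsto (fun m : ℕ => f (⌊u * 2 ^ (m + 1)⌋₊ / 2 ^ (m + 1))) atTop (𝓝 (f u)) := by
  have hpow : Tendsto (fun m : ℕ => (2 : ℝ) ^ (m + 1)) atTop atTop :=
    (tendsto_pow_atTop_atTop_of_one_lt one_lt_two).comp (tendsto_add_atTop_nat 1)
  have hmem (m : ℕ) : (⌊u * 2 ^ (m + 1)⌋₊ : ℝ) / 2 ^ (m + 1) ∈ Icc 0 b :=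
    ⟨by positivity, (div_le_iff₀ (by positivity)).2 (Nat.floor_le (by have := hu.1; positivity))
      |>.trans hu.2⟩
  exact (hf u hu).tendsto.comp <| tendsto_nhdsWithin_iff.2
    ⟨(tendsto_nat_floor_mul_div_atTop hu.1).comp hpow, .of_forall hmem⟩

lemma monotoneOn_of_dyadicIncrementBound {f : ℝ → ℝ} (hcont : ContinuousOn f (Icc 0 (1 / 2)))
    (hf : ∀ n, DyadicIncrementBound f n) : MonotoneOn f (Icc 0 (1 / 2)) := by
  intro s hs t ht hst
  refine le_of_tendsto_of_tendsto' (tendsto_comp_floor_mul_two_pow_div hcont hs)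
    (tendsto_comp_floor_mul_two_pow_div hcont ht) fun m => ?_
  have hfloor : ⌊s * 2 ^ (m + 1)⌋₊ ≤ ⌊t * 2 ^ (m + 1)⌋₊ := Nat.floor_le_floor (by gcongr)
  exact sub_nonneg.1 ((hf m).sub_mem_Icc hfloor (floor_mul_two_pow_succ_le ht.2 m)).1

lemma DyadicIncrementBound.sub_le_of_sub_le {f : ℝ → ℝ} {n : ℕ} (hf : DyadicIncrementBound f n)
    (hmono : MonotoneOn f (Icc 0 (1 / 2))) {s t : ℝ} (hs : s ∈ Icc 0 (1 / 2))
    (ht : t ∈ Icc 0 (1 / 2)) (hts : t - s ≤ 1 / 2 ^ (n + 1)) : f t - f s ≤ 2 * (3 / 4) ^ n := by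
  set k := ⌊s * 2 ^ (n + 1)⌋₊
  set l := min (k + 2) (2 ^ n)
  have hk : k ≤ 2 ^ n := floor_mul_two_pow_succ_le hs.2 n
  have hkl : k ≤ l := le_min (by omega) hk
  have hks : (k : ℝ) / 2 ^ (n + 1) ≤ s :=
    (div_le_iff₀ (by positivity)).2 (Nat.floor_le (by have := hs.1; positivity))
  have htl : t ≤ l / 2 ^ (n + 1) := by
    obtain ⟨hl, -⟩ | ⟨hl, -⟩ : l = k + 2 ∧ _ ∨ l = 2 ^ n ∧ _ := min_cases _ _ <;> rw [hl]
    · have hsk := Nat.lt_floor_add_one (s * 2 ^ (n + 1))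
      rw [le_div_iff₀ (by positivity)]
      rw [le_div_iff₀ (by positivity)] at hts
      push_cast
      nlinarith
    · push_cast
      rw [two_pow_div_two_pow_succ]
      exact ht.2
  have hl2 : (l : ℝ) - k ≤ 2 := by
    have : l ≤ k + 2 := min_le_left _ _
    linarith [show (l : ℝ) ≤ k + 2 by exact_mod_cast this]
  calc f t - f s ≤ f (l / 2 ^ (n + 1)) - f (k / 2 ^ (n + 1)) :=
        sub_le_sub (hmono ht (div_two_pow_succ_mem_Icc (min_le_right _ _)) htl)
          (hmono (div_two_pow_succ_mem_Icc hk) hs hks)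
    _ ≤ ((l : ℝ) - k) * (3 / 4) ^ n := (hf.sub_mem_Icc hkl (min_le_right _ _)).2
    _ ≤ 2 * (3 / 4) ^ n := by gcongr

lemma one_div_two_pow_rpow_logb (j : ℕ) :
    (1 / 2 ^ j : ℝ) ^ Real.logb 2 (4 / 3) = (3 / 4) ^ j := by
  rw [one_div, Real.inv_rpow (by positivity), ← Real.rpow_natCast, ← Real.rpow_mul zero_le_two,
    mul_comm, Real.rpow_mul zero_le_two, Real.rpow_logb two_pos one_lt_two.ne' (by norm_num),
    Real.rpow_natCast, ← inv_pow]
  norm_num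

lemma abs_sub_le_rpow_of_dyadicIncrementBound {f : ℝ → ℝ}
    (hcont : ContinuousOn f (Icc 0 (1 / 2))) (hf : ∀ n, DyadicIncrementBound f n) {s t : ℝ}
    (hs : s ∈ Icc 0 (1 / 2)) (ht : t ∈ Icc 0 (1 / 2)) :
    |f s - f t| ≤ 32 / 9 * |s - t| ^ Real.logb 2 (4 / 3) := by
  have hα : 0 < Real.logb 2 (4 / 3) := Real.logb_pos one_lt_two (by norm_num)
  wlog hst : s < t generalizing s t
  · rcases (not_lt.1 hst).eq_or_lt with rfl | hts
    · simp [Real.zero_rpow hα.ne']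
    · rw [abs_sub_comm, abs_sub_comm s]
      exact this ht hs hts
  obtain ⟨n, hn, hn'⟩ := exists_nat_pow_near (x := 1 / (2 * (t - s))) (y := 2)
    (by rw [le_div_iff₀ (by linarith)]; linarith [hs.1, ht.2]) one_lt_two
  have hupper : t - s ≤ 1 / 2 ^ (n + 1) := by
    rw [le_div_iff₀ (by linarith)] at hn
    rw [le_div_iff₀ (by positivity), pow_succ]
    linarith
  have hlower : 1 / 2 ^ (n + 2) ≤ t - s := by
    rw [div_lt_iff₀ (by linarith)] at hn'
    rw [div_le_iff₀ (by positivity), pow_succ]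
    linarith
  have hmono := monotoneOn_of_dyadicIncrementBound hcont hf
  rw [abs_sub_comm, abs_of_nonneg (sub_nonneg.2 (hmono hs ht hst.le)), abs_sub_comm,
    abs_of_pos (sub_pos.2 hst)]
  calc f t - f s ≤ 2 * (3 / 4) ^ n := (hf n).sub_le_of_sub_le hmono hs ht hupper
    _ = 32 / 9 * (1 / 2 ^ (n + 2) : ℝ) ^ Real.logb 2 (4 / 3) := by
        rw [one_div_two_pow_rpow_logb, pow_add]; ring
    _ ≤ 32 / 9 * (t - s) ^ Real.logb 2 (4 / 3) := by gcongr

theorem bridge_neighboring_increments_and_holder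
    (A : ℝ → ℝ)
    (hAcont : ContinuousOn A (Set.Icc 0 (1 / 2)))
    (hA0 : A 0 = 0) (hAhalf : A (1 / 2) = 1)
    (hArec : ∀ n : ℕ, 2 ≤ n → ∀ k : ℕ, Odd k → k < 2 ^ (n - 1) →
      A ((k : ℝ) / 2 ^ n) =
        nlMean (A (((k : ℝ) - 1) / 2 ^ n)) (A (((k : ℝ) + 1) / 2 ^ n))) :
    (∀ n : ℕ, 1 ≤ n → ∀ k : ℕ, k + 1 ≤ 2 ^ (n - 1) →
        0 < A (((k : ℝ) + 1) / 2 ^ n) - A ((k : ℝ) / 2 ^ n) ∧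
          A (((k : ℝ) + 1) / 2 ^ n) - A ((k : ℝ) / 2 ^ n) ≤ (3 / 4) ^ (n - 1)) ∧
      ∃ C : ℝ, 0 < C ∧ ∀ s ∈ Set.Icc (0 : ℝ) (1 / 2), ∀ t ∈ Set.Icc (0 : ℝ) (1 / 2),
        |A s - A t| ≤ C * |s - t| ^ Real.logb 2 (4 / 3) := by
  have hinc := dyadicIncrementBound_of_bridge hA0 hAhalf hArec
  refine ⟨fun n hn k hk => ?_, 32 / 9, by norm_num,
    fun s hs t ht => abs_sub_le_rpow_of_dyadicIncrementBound hAcont hinc hs ht⟩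
  obtain ⟨n, rfl⟩ := Nat.exists_eq_add_of_le' hn
  rw [Nat.add_sub_cancel] at hk ⊢
  exact hinc n k hk
end
end

section
/- For all x, y, z ∈ [0,1] such that y and z lie on the same side of x (i.e. (x−y)(x−z) ≥ 0), one has M[M[y,x], M[z,x]] ≥ M[M[y,z], x]. -/
open MeasureTheory

noncomputable section

/-!
Write `A`, `B`, `C` for the radicals `√(4 + (y - x)²)`, `√(4 + (z - x)²)`, `√(4 + (y - z)²)`.
After squaring and clearing denominators, the inequality reads `0 ≤ c₀ + c₁ AB - c₂ C` with
polynomials `cᵢ` in `x, y, z`, where `c₀ ≤ 0 ≤ c₁` on the same-side region. Multiplying by `C` and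
using the rational bounds `C ≤ 2 + (y - z)²/4` and `ABC ≥ 8 + (y - x)² + (z - x)² + (y - z)²`
leaves a polynomial inequality, whose left side factors as `(x - y)(x - z)(y - z)² R / 4`. As a
function of `f = (x - y)(x - z) ∈ [0, (x - (y + z)/2)²]`, `R` is a concave quadratic, so it
suffices to check `R ≥ 0` at the two ends of that interval.
-/

open Real Set

lemma nlMean_nonneg {a b : ℝ} (h : 0 ≤ a + b) : 0 ≤ nlMean a b :=
  div_nonneg h (sqrt_nonneg _)

lemma nlMean_le_nlMean_of_sq_mul_le {a b c d : ℝ} (hab : 0 ≤ a + b) (hcd : 0 ≤ c + d)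
    (h : (a + b) ^ 2 * (4 + (c - d) ^ 2) ≤ (c + d) ^ 2 * (4 + (a - b) ^ 2)) :
    nlMean a b ≤ nlMean c d := by
  have hab' : 0 < √(4 + (a - b) ^ 2) := sqrt_pos.2 (by positivity)
  have hcd' : 0 < √(4 + (c - d) ^ 2) := sqrt_pos.2 (by positivity)
  unfold nlMean
  rw [div_le_div_iff₀ hab' hcd', ← sqrt_sq hab, ← sqrt_sq hcd, ← sqrt_mul (sq_nonneg _),
    ← sqrt_mul (sq_nonneg _)]
  exact sqrt_le_sqrt h

lemma sqrt_four_add_sq_le (d : ℝ) : √(4 + d ^ 2) ≤ 2 + d ^ 2 / 4 := by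
  rw [sqrt_le_left (by positivity)]
  nlinarith [sq_nonneg (d ^ 2)]

/-- `|Re w| ≤ |w|` for `w = (2 + ip)(2 - iq)(2 + i(q - p))`. -/
lemma eight_add_sq_add_sq_add_sq_le_sqrt_mul (p q : ℝ) :
    8 + p ^ 2 + q ^ 2 + (p - q) ^ 2 ≤ √(4 + p ^ 2) * √(4 + q ^ 2) * √(4 + (p - q) ^ 2) := by
  rw [← sqrt_mul (by positivity), ← sqrt_mul (by positivity)]
  refine le_sqrt_of_sq_le ?_
  nlinarith [sq_nonneg (p * q * (p - q))]

lemma concave_quadratic_nonneg {c g k f T : ℝ} (hk : 0 ≤ k) (hf : 0 ≤ f) (hfT : f ≤ T)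
    (hc : 0 ≤ c) (hT : 0 ≤ c + g * T - k * T ^ 2) : 0 ≤ c + g * f - k * f ^ 2 := by
  rcases (hf.trans hfT).eq_or_lt with hT0 | hT0
  · obtain rfl : f = 0 := le_antisymm (hT0 ▸ hfT) hf
    simpa using hc
  refine nonneg_of_mul_nonneg_right ?_ hT0
  nlinarith [mul_nonneg (sub_nonneg.2 hfT) hc, mul_nonneg hf hT,
    mul_nonneg (mul_nonneg (mul_nonneg hk hf) hT0.le) (sub_nonneg.2 hfT)]

/-- The polynomials `c₀`, `c₁`, `c₂` above; see `sq_mul_sub_sq_mul_eq_cleared`. -/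
def clearedConst (x y z : ℝ) : ℝ :=
  ((x + y) ^ 2 * (4 + (x - z) ^ 2) + (x + z) ^ 2 * (4 + (x - y) ^ 2)) * (4 + (y - z) ^ 2)
    - (4 + (x - y) ^ 2) * (4 + (x - z) ^ 2) * ((y + z) ^ 2 + x ^ 2 * (4 + (y - z) ^ 2))

def clearedCoeffAB (x y z : ℝ) : ℝ :=
  (x + y) * (x + z) * ((2 + x ^ 2) * (4 + (y - z) ^ 2) + (y + z) ^ 2)

def clearedCoeffC (x y z : ℝ) : ℝ :=
  x * (y + z) * ((x + y) ^ 2 * (4 + (x - z) ^ 2) + (x + z) ^ 2 * (4 + (x - y) ^ 2)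
    + 2 * (4 + (x - y) ^ 2) * (4 + (x - z) ^ 2))

lemma sq_mul_sub_sq_mul_eq_cleared (x y z A B C : ℝ) (hA : A ^ 2 = 4 + (y - x) ^ 2)
    (hB : B ^ 2 = 4 + (z - x) ^ 2) (hC : C ^ 2 = 4 + (y - z) ^ 2) (hA0 : A ≠ 0) (hB0 : B ≠ 0)
    (hC0 : C ≠ 0) :
    ((y + x) / A + (z + x) / B) ^ 2 * (4 + ((y + z) / C - x) ^ 2)
      - ((y + z) / C + x) ^ 2 * (4 + ((y + x) / A - (z + x) / B) ^ 2)
    = 4 * (clearedConst x y z + clearedCoeffAB x y z * (A * B) - clearedCoeffC x y z * C)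
      / (A ^ 2 * B ^ 2 * C ^ 2) := by
  rw [eq_div_iff (by positivity)]
  field_simp
  unfold clearedConst clearedCoeffAB clearedCoeffC
  grind

/-- The polynomial `R` above, evaluated at `s = y + z` and `f = (x - y)(x - z)`. -/
def sameSideRemainder (x s f : ℝ) : ℝ :=
  4 * s * (x * (s - 4 * x) ^ 2 + 8 * x * (1 - x ^ 2) + 2 * s)
    + (8 + 4 * x ^ 2 - 40 * x * s + s ^ 2 - x ^ 2 * (2 * x - s) ^ 2) * f - (8 - 4 * x ^ 2) * f ^ 2

lemma sameSideRemainder_nonneg {x s f : ℝ} (hx : x ∈ Icc (0 : ℝ) 1) (hs : s ∈ Icc (0 : ℝ) 2)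
    (hf : 0 ≤ f) (hfs : f ≤ (x - s / 2) ^ 2) : 0 ≤ sameSideRemainder x s f := by
  obtain ⟨hx0, hx1⟩ := hx
  obtain ⟨hs0, hs2⟩ := hs
  have hx2 : 0 ≤ 1 - x ^ 2 := by nlinarith
  refine concave_quadratic_nonneg (by nlinarith) hf hfs (by positivity) ?_
  obtain ⟨w, rfl⟩ : ∃ w, s = 2 * w := ⟨s / 2, by ring⟩
  have hw0 : 0 ≤ w := by linarith
  have hw1 : w ≤ 1 := by linarith
  have hxw : x * w ≤ 1 := by nlinarith
  have key : 4 * (2 * w) * (x * (2 * w - 4 * x) ^ 2 + 8 * x * (1 - x ^ 2) + 2 * (2 * w))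
      + (8 + 4 * x ^ 2 - 40 * x * (2 * w) + (2 * w) ^ 2 - x ^ 2 * (2 * x - 2 * w) ^ 2)
        * (x - 2 * w / 2) ^ 2
      - (8 - 4 * x ^ 2) * ((x - 2 * w / 2) ^ 2) ^ 2
      = 4 * x ^ 2 * (2 - x ^ 2) + 8 * x ^ 3 * w + 24 * x * w * (1 - w ^ 2)
        + 8 * x * w * (3 - x * w) + 4 * w ^ 2 * (10 - w ^ 2) := by ring
  rw [key]
  have hw2 : 0 ≤ 1 - w ^ 2 := by nlinarith
  have hxw0 : 0 ≤ x * w := mul_nonneg hx0 hw0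
  nlinarith [mul_nonneg (sq_nonneg x) hx2, mul_nonneg (pow_nonneg hx0 3) hw0, mul_nonneg hxw0 hw2,
    mul_nonneg hxw0 (by linarith : 0 ≤ 3 - x * w), mul_nonneg (sq_nonneg w) hw2]

lemma clearedConst_nonpos {x y z : ℝ} (hx : x ∈ Icc (0 : ℝ) 1) (hy : y ∈ Icc (0 : ℝ) 1)
    (hz : z ∈ Icc (0 : ℝ) 1) (hxyz : 0 ≤ (x - y) * (x - z)) : clearedConst x y z ≤ 0 := by
  obtain ⟨hx0, hx1⟩ := hx
  obtain ⟨hy0, hy1⟩ := hy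
  obtain ⟨hz0, hz1⟩ := hz
  obtain ⟨f, hf⟩ : ∃ f, (x - y) * (x - z) = f := ⟨_, rfl⟩
  obtain ⟨d, hd⟩ : ∃ d, (y - z) ^ 2 = d := ⟨_, rfl⟩
  obtain ⟨e, he⟩ : ∃ e, 2 * x - y - z = e := ⟨_, rfl⟩
  have hfac : clearedConst x y z = f * (-x ^ 2 * (f * d + 8 * f + 32) + 4 * x * e * (4 - d + f)
      + f * d - 4 * f ^ 2 - 16 * d - 24 * f - 32) := by
    rw [← hf, ← hd, ← he]; unfold clearedConst; ring
  have hf1 : f ≤ 1 := by nlinarith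
  have hd0 : 0 ≤ d := hd ▸ sq_nonneg _
  have hd1 : d ≤ 1 := by nlinarith
  have hxe : x * e ≤ 2 * x ^ 2 := by nlinarith
  rw [hfac]
  refine mul_nonpos_of_nonneg_of_nonpos (hf ▸ hxyz) ?_
  nlinarith [mul_le_mul_of_nonneg_right hxe (by linarith : 0 ≤ 4 - d + f),
    mul_le_mul_of_nonneg_right hf1 hd0, mul_nonneg (mul_nonneg (sq_nonneg x) (hf ▸ hxyz)) hd0,
    mul_nonneg (sq_nonneg x) hd0]

lemma clearedConst_add_clearedCoeffAB_sub_clearedCoeffC_nonneg {x y z A B C : ℝ}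
    (hx : x ∈ Icc (0 : ℝ) 1) (hy : y ∈ Icc (0 : ℝ) 1) (hz : z ∈ Icc (0 : ℝ) 1)
    (hxyz : 0 ≤ (x - y) * (x - z)) (hC : 0 < C) (hC2 : C ^ 2 = 4 + (y - z) ^ 2)
    (hCle : C ≤ 2 + (y - z) ^ 2 / 4)
    (hABC : 8 + (y - x) ^ 2 + (z - x) ^ 2 + (y - z) ^ 2 ≤ A * B * C) :
    0 ≤ clearedConst x y z + clearedCoeffAB x y z * (A * B) - clearedCoeffC x y z * C := by
  refine nonneg_of_mul_nonneg_right ?_ hC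
  have hConst := clearedConst_nonpos hx hy hz hxyz
  have hCoeffAB : 0 ≤ clearedCoeffAB x y z := by
    unfold clearedCoeffAB
    have := hx.1; have := hy.1; have := hz.1
    positivity
  have hR : 0 ≤ sameSideRemainder x (y + z) ((x - y) * (x - z)) :=
    sameSideRemainder_nonneg hx ⟨by linarith [hy.1, hz.1], by linarith [hy.2, hz.2]⟩ hxyz
      (by nlinarith [sq_nonneg (y - z)])
  have hid : clearedConst x y z * (2 + (y - z) ^ 2 / 4)
        + clearedCoeffAB x y z * (8 + (y - x) ^ 2 + (z - x) ^ 2 + (y - z) ^ 2)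
        - clearedCoeffC x y z * (4 + (y - z) ^ 2)
      = (x - y) * (x - z) * (y - z) ^ 2 * sameSideRemainder x (y + z) ((x - y) * (x - z)) / 4 := by
    unfold clearedConst clearedCoeffAB clearedCoeffC sameSideRemainder; ring
  have hpos : 0 ≤ (x - y) * (x - z) * (y - z) ^ 2
      * sameSideRemainder x (y + z) ((x - y) * (x - z)) / 4 := by
    positivity
  linear_combination mul_le_mul_of_nonpos_left hCle hConst
    + mul_le_mul_of_nonneg_left hABC hCoeffAB + clearedCoeffC x y z * hC2 - hid + hpos

theorem nlMean_same_side_inequality :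
    ∀ x ∈ Set.Icc (0 : ℝ) 1, ∀ y ∈ Set.Icc (0 : ℝ) 1, ∀ z ∈ Set.Icc (0 : ℝ) 1,
      0 ≤ (x - y) * (x - z) →
      nlMean (nlMean y z) x ≤ nlMean (nlMean y x) (nlMean z x) := by
  intro x hx y hy z hz hxyz
  refine nlMean_le_nlMean_of_sq_mul_le
    (add_nonneg (nlMean_nonneg (add_nonneg hy.1 hz.1)) hx.1)
    (add_nonneg (nlMean_nonneg (add_nonneg hy.1 hx.1)) (nlMean_nonneg (add_nonneg hz.1 hx.1)))
    (sub_nonneg.1 ?_)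
  unfold nlMean
  set A := √(4 + (y - x) ^ 2)
  set B := √(4 + (z - x) ^ 2)
  set C := √(4 + (y - z) ^ 2)
  have hA : 0 < A := sqrt_pos.2 (by positivity)
  have hB : 0 < B := sqrt_pos.2 (by positivity)
  have hC : 0 < C := sqrt_pos.2 (by positivity)
  have hABC : 8 + (y - x) ^ 2 + (z - x) ^ 2 + (y - z) ^ 2 ≤ A * B * C := by
    simpa only [sub_sub_sub_cancel_right] using
      eight_add_sq_add_sq_add_sq_le_sqrt_mul (y - x) (z - x)
  rw [sq_mul_sub_sq_mul_eq_cleared x y z A B C (sq_sqrt (by positivity)) (sq_sqrt (by positivity))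
    (sq_sqrt (by positivity)) hA.ne' hB.ne' hC.ne']
  have := clearedConst_add_clearedCoeffAB_sub_clearedCoeffC_nonneg hx hy hz hxyz hC
    (sq_sqrt (by positivity)) (sqrt_four_add_sq_le _) hABC
  positivity
end
end
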